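/- arXiv:1902.08162 — 8 statements merged into one kernel-verified Lean document; each statement's English description precedes it below -/
import Mathlib

section
/- For every t with -1 < t < 1, the Cauchy principal value integral of sqrt(1-x^2)/(x-t) over x in (-1,1) equals -π t. -/
/-!
With `s = √(1 - t²)`, the function
`F x = √(1 - x²) - t arcsin x - s log (1 - t x + s √(1 - x²)) + s log |x - t|`
is a primitive of `√(1 - x²) / (x - t)` on `[-1, 1] \ {t}`. Its singular part `s log |x - t|` is
even about `t`, so it cancels from `F (t - ε) - F (t + ε)`, and the principal value is
`F 1 - F (-1) = -π t`.
-/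

open MeasureTheory Filter Set Real Topology

theorem Set.Ioo_sdiff_Ioo_eq_Ioc_union_Ico {α : Type*} [LinearOrder α] {a b u v : α}
    (hau : a ≤ u) (huv : u < v) (hvb : v ≤ b) :
    Ioo a b \ Ioo u v = Ioc a u ∪ Ico v b := by
  ext x
  simp only [mem_sdiff, mem_Ioo, mem_union, mem_Ioc, mem_Ico]
  grind

section PrincipalValue

variable {E : Type*} [NormedAddCommGroup E] [NormedSpace ℝ E] [CompleteSpace E]
  {f F : ℝ → E} {a b t : ℝ}

theorem integral_eq_sub_of_hasDerivAt_of_Icc_subset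
    (hF : ContinuousOn F (Icc a b \ {t})) (hf : ContinuousOn f (Icc a b \ {t}))
    (hderiv : ∀ x ∈ Ioo a b \ {t}, HasDerivAt F (f x) x)
    {u v : ℝ} (huv : u ≤ v) (hsub : Icc u v ⊆ Icc a b \ {t}) :
    ∫ x in u..v, f x = F v - F u := by
  have hau : a ≤ u := (hsub ⟨le_rfl, huv⟩).1.1
  have hvb : v ≤ b := (hsub ⟨huv, le_rfl⟩).1.2
  refine intervalIntegral.integral_eq_sub_of_hasDerivAt_of_le huv (hF.mono hsub)
    (fun x hx => hderiv x
      ⟨⟨hau.trans_lt hx.1, hx.2.trans_le hvb⟩, (hsub (Ioo_subset_Icc_self hx)).2⟩)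
    ((hf.mono hsub).intervalIntegrable_of_Icc huv)

theorem tendsto_setIntegral_Ioo_sdiff_Ioo_of_hasDerivAt {L : E} (hat : a < t) (htb : t < b)
    (hF : ContinuousOn F (Icc a b \ {t})) (hf : ContinuousOn f (Icc a b \ {t}))
    (hderiv : ∀ x ∈ Ioo a b \ {t}, HasDerivAt F (f x) x)
    (hjump : Tendsto (fun ε => F (t - ε) - F (t + ε)) (𝓝[>] 0) (𝓝 L)) :
    Tendsto (fun ε => ∫ x in Ioo a b \ Ioo (t - ε) (t + ε), f x) (𝓝[>] 0)
      (𝓝 (F b - F a + L)) := by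
  refine (hjump.const_add (F b - F a)).congr' ?_
  filter_upwards [Ioo_mem_nhdsGT (lt_min (sub_pos.2 hat) (sub_pos.2 htb))] with ε ⟨hε, hεt⟩
  have hεa : a < t - ε := by linarith [min_le_left (t - a) (b - t)]
  have hεb : t + ε < b := by linarith [min_le_right (t - a) (b - t)]
  have hleft : Icc a (t - ε) ⊆ Icc a b \ {t} := fun x hx =>
    ⟨⟨hx.1, by linarith [hx.2]⟩, by rintro rfl; linarith [hx.2]⟩
  have hright : Icc (t + ε) b ⊆ Icc a b \ {t} := fun x hx =>
    ⟨⟨by linarith [hx.1], hx.2⟩, by rintro rfl; linarith [hx.1]⟩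
  have hint_left : IntegrableOn f (Ioc a (t - ε)) :=
    ((hf.mono hleft).integrableOn_Icc).mono_set Ioc_subset_Icc_self
  have hint_right : IntegrableOn f (Ico (t + ε) b) :=
    ((hf.mono hright).integrableOn_Icc).mono_set Ico_subset_Icc_self
  rw [Ioo_sdiff_Ioo_eq_Ioc_union_Ico hεa.le (by linarith) hεb.le,
    setIntegral_union (disjoint_left.2 fun x hx hx' => by linarith [hx.2, hx'.1]) measurableSet_Ico
      hint_left hint_right,
    integral_Ico_eq_integral_Ioc, ← intervalIntegral.integral_of_le hεa.le,
    ← intervalIntegral.integral_of_le hεb.le,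
    integral_eq_sub_of_hasDerivAt_of_Icc_subset hF hf hderiv hεa.le hleft,
    integral_eq_sub_of_hasDerivAt_of_Icc_subset hF hf hderiv hεb.le hright]
  abel

end PrincipalValue

section SqrtOneSubSqDiv

variable {t x : ℝ}

noncomputable def sqrtOneSubSqDivRegular (t x : ℝ) : ℝ :=
  √(1 - x ^ 2) - t * arcsin x - √(1 - t ^ 2) * log (1 - t * x + √(1 - t ^ 2) * √(1 - x ^ 2))

/-- Since `log (x - t) = log |x - t|`, this is a primitive on both sides of `t`. -/
noncomputable def sqrtOneSubSqDivPrimitive (t x : ℝ) : ℝ :=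
  sqrtOneSubSqDivRegular t x + √(1 - t ^ 2) * log (x - t)

theorem one_sub_mul_add_sqrt_mul_sqrt_pos (ht : t ∈ Ioo (-1) 1) (hx : x ∈ Icc (-1) 1) :
    0 < 1 - t * x + √(1 - t ^ 2) * √(1 - x ^ 2) := by
  have htx : t * x < 1 := by
    nlinarith [sq_nonneg (t - x), mul_pos (sub_pos.2 ht.2) (neg_lt_iff_pos_add.1 ht.1),
      mul_nonneg (sub_nonneg.2 hx.2) (neg_le_iff_add_nonneg.1 hx.1)]
  have := mul_nonneg (sqrt_nonneg (1 - t ^ 2)) (sqrt_nonneg (1 - x ^ 2))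
  linarith

theorem continuousOn_sqrtOneSubSqDivRegular (ht : t ∈ Ioo (-1) 1) :
    ContinuousOn (sqrtOneSubSqDivRegular t) (Icc (-1) 1) := by
  unfold sqrtOneSubSqDivRegular
  refine Continuous.continuousOn (by fun_prop) |>.sub (continuousOn_const.mul ?_)
  exact ContinuousOn.log (by fun_prop) fun x hx => (one_sub_mul_add_sqrt_mul_sqrt_pos ht hx).ne'

theorem continuousOn_sqrtOneSubSqDivPrimitive (ht : t ∈ Ioo (-1) 1) :
    ContinuousOn (sqrtOneSubSqDivPrimitive t) (Icc (-1) 1 \ {t}) :=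
  (continuousOn_sqrtOneSubSqDivRegular ht).mono sdiff_subset |>.add <| continuousOn_const.mul <|
    ContinuousOn.log (by fun_prop) fun _ hx => sub_ne_zero.2 hx.2

theorem sqrtOneSubSqDivPrimitive_one : sqrtOneSubSqDivPrimitive t 1 = -(t * π / 2) := by
  simp only [sqrtOneSubSqDivPrimitive, sqrtOneSubSqDivRegular, one_pow, sub_self, sqrt_zero,
    arcsin_one, mul_one, mul_zero, add_zero]
  ring

theorem sqrtOneSubSqDivPrimitive_neg_one : sqrtOneSubSqDivPrimitive t (-1) = t * π / 2 := by
  rw [sqrtOneSubSqDivPrimitive, sqrtOneSubSqDivRegular, show (-1 : ℝ) - t = -(1 + t) by ring,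
    log_neg_eq_log]
  simp only [neg_one_sq, sub_self, sqrt_zero, arcsin_neg_one, mul_neg, mul_one, mul_zero, add_zero,
    sub_neg_eq_add]
  ring

theorem tendsto_sqrtOneSubSqDivPrimitive_sub (ht : t ∈ Ioo (-1) 1) :
    Tendsto (fun ε => sqrtOneSubSqDivPrimitive t (t - ε) - sqrtOneSubSqDivPrimitive t (t + ε))
      (𝓝[>] 0) (𝓝 0) := by
  have hG : ContinuousAt (sqrtOneSubSqDivRegular t) t :=
    (continuousOn_sqrtOneSubSqDivRegular ht).continuousAt (Icc_mem_nhds ht.1 ht.2)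
  have hlim : Tendsto
      (fun ε => sqrtOneSubSqDivRegular t (t - ε) - sqrtOneSubSqDivRegular t (t + ε))
      (𝓝 0) (𝓝 0) := by
    simpa using (hG.tendsto.comp ((continuous_sub_left t).tendsto' 0 t (sub_zero t))).sub
      (hG.tendsto.comp ((continuous_const_add t).tendsto' 0 t (add_zero t)))
  refine (hlim.mono_left nhdsWithin_le_nhds).congr fun ε => ?_
  simp only [sqrtOneSubSqDivPrimitive, sub_sub_cancel_left, add_sub_cancel_left, log_neg_eq_log]
  ring

theorem hasDerivAt_sqrt_one_sub_sq (hx : x ∈ Ioo (-1) 1) :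
    HasDerivAt (fun x => √(1 - x ^ 2)) (-x / √(1 - x ^ 2)) x := by
  have hx2 : 1 - x ^ 2 ≠ 0 := by nlinarith [hx.1, hx.2]
  convert (((hasDerivAt_pow 2 x).const_sub 1).sqrt hx2) using 1
  field_simp
  ring

theorem hasDerivAt_sqrtOneSubSqDivPrimitive (ht : t ∈ Ioo (-1) 1) (hx : x ∈ Ioo (-1) 1)
    (hxt : x ≠ t) : HasDerivAt (sqrtOneSubSqDivPrimitive t) (√(1 - x ^ 2) / (x - t)) x := by
  have hN := one_sub_mul_add_sqrt_mul_sqrt_pos ht (Ioo_subset_Icc_self hx)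
  set s := √(1 - t ^ 2)
  have hsqrt := hasDerivAt_sqrt_one_sub_sq hx
  set y := √(1 - x ^ 2)
  have harcsin : HasDerivAt arcsin (1 / y) x :=
    hasDerivAt_arcsin (by linarith [hx.1]) (by linarith [hx.2])
  have hlinear : HasDerivAt (fun x => 1 - t * x) (-t) x := by
    simpa using ((hasDerivAt_id x).const_mul t).const_sub 1
  have hlogN : HasDerivAt (fun x => log (1 - t * x + s * √(1 - x ^ 2)))
      ((-t + s * (-x / y)) / (1 - t * x + s * y)) x :=
    (hlinear.add (hsqrt.const_mul s)).log hN.ne'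
  have hlog : HasDerivAt (fun x => log (x - t)) (1 / (x - t)) x :=
    ((hasDerivAt_id' x).sub_const t).log (sub_ne_zero.2 hxt)
  refine (((hsqrt.sub (harcsin.const_mul t)).sub (hlogN.const_mul s)).add
    (hlog.const_mul s)).congr_deriv ?_
  have hy0 : 0 < y := sqrt_pos.2 (by nlinarith [hx.1, hx.2])
  have hy2 : y ^ 2 = 1 - x ^ 2 := sq_sqrt (by nlinarith [hx.1, hx.2])
  have hs2 : s ^ 2 = 1 - t ^ 2 := sq_sqrt (by nlinarith [ht.1, ht.2])
  have hxt' : x - t ≠ 0 := sub_ne_zero.2 hxt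
  -- `field_simp` clears the denominator `1 - t x + s y` only once it is an atom.
  obtain ⟨N, hN', hNdef⟩ : ∃ N, N ≠ 0 ∧ 1 - t * x + s * y = N := ⟨_, hN.ne', rfl⟩
  rw [hNdef]
  field_simp
  linear_combination (s ^ 2 - N) * hy2 + (N - s * y) * hs2 - s * (y - s) * hNdef

end SqrtOneSubSqDiv

/-- Cauchy principal value integral of `sqrt (1 - x^2) / (x - t)` over `(-1,1)`
equals `-π t` for `-1 < t < 1`. -/
theorem pv_sqrt_one_sub_sq_div (t : ℝ) (ht : -1 < t) (ht1 : t < 1) :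
    Tendsto
      (fun ε : ℝ =>
        ∫ x in Set.Ioo (-1 : ℝ) 1 \ Set.Ioo (t - ε) (t + ε),
          Real.sqrt (1 - x ^ 2) / (x - t))
      (nhdsWithin 0 (Set.Ioi 0)) (nhds (-Real.pi * t)) := by
  have ht' : t ∈ Ioo (-1) 1 := ⟨ht, ht1⟩
  have hf : ContinuousOn (fun x => √(1 - x ^ 2) / (x - t)) (Icc (-1) 1 \ {t}) :=
    ContinuousOn.div (by fun_prop) (by fun_prop) fun _ hx => sub_ne_zero.2 hx.2
  have hpv := tendsto_setIntegral_Ioo_sdiff_Ioo_of_hasDerivAt ht ht1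
    (continuousOn_sqrtOneSubSqDivPrimitive ht') hf
    (fun x hx => hasDerivAt_sqrtOneSubSqDivPrimitive ht' hx.1 hx.2)
    (tendsto_sqrtOneSubSqDivPrimitive_sub ht')
  rwa [sqrtOneSubSqDivPrimitive_one, sqrtOneSubSqDivPrimitive_neg_one,
    show -(t * π / 2) - t * π / 2 + 0 = -π * t by ring] at hpv
end

section
/- For every t with -1 < t < 1, the Cauchy principal value integral of 1/((x-t) sqrt(1-x^2)) over x in (-1,1) equals 0. -/
/-!
With `s = √(1 - t²)`, the function `F x = (log |x - t| - log (1 - t x + s √(1 - x²))) / s`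
is a primitive of the integrand on `[-1, 1] \ {t}` and vanishes at `±1`. Hence the truncated
integral is `F (t - ε) - F (t + ε)`, in which the two `log ε` terms cancel, leaving a difference
of values of the continuous function `log (1 - t x + s √(1 - x²)) / s` at `t ± ε`, which tends
to `0`. Integrability near `±1` is automatic: on each side of `t` the integrand is a derivative
of constant sign.
-/

open MeasureTheory Filter Set

theorem integrableOn_deriv_of_nonpos {g g' : ℝ → ℝ} {a b : ℝ}
    (hcont : ContinuousOn g (Icc a b)) (hderiv : ∀ x ∈ Ioo a b, HasDerivAt g (g' x) x)
    (hg' : ∀ x ∈ Ioo a b, g' x ≤ 0) : IntegrableOn g' (Ioc a b) := by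
  simpa using (intervalIntegral.integrableOn_deriv_of_nonneg hcont.neg
    (fun x hx => (hderiv x hx).neg) (fun x hx => neg_nonneg.2 (hg' x hx))).neg

theorem setIntegral_Ioo_diff_Ioo_eq_sub {E : Type*} [NormedAddCommGroup E] [NormedSpace ℝ E]
    [CompleteSpace E] {f F : ℝ → E} {a b c d : ℝ}
    (hac : a ≤ c) (hcd : c < d) (hdb : d ≤ b)
    (hFac : ContinuousOn F (Icc a c)) (hFdb : ContinuousOn F (Icc d b))
    (hderiv : ∀ x ∈ Ioo a c ∪ Ioo d b, HasDerivAt F (f x) x)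
    (hfac : IntegrableOn f (Ioc a c)) (hfdb : IntegrableOn f (Ioc d b)) :
    ∫ x in Ioo a b \ Ioo c d, f x = F c - F a + (F b - F d) := by
  have hsplit : Ioo a b \ Ioo c d = Ioc a c ∪ Ico d b := by
    ext x
    simp only [Set.mem_sdiff, mem_Ioo, mem_union, mem_Ioc, mem_Ico, not_and_or, not_lt]
    constructor
    · rintro ⟨⟨hax, hxb⟩, hxc | hdx⟩ <;> [left; right] <;> constructor <;> linarith
    · rintro (⟨hax, hxc⟩ | ⟨hdx, hxb⟩)
      · exact ⟨⟨hax, by linarith⟩, Or.inl hxc⟩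
      · exact ⟨⟨by linarith, hxb⟩, Or.inr hdx⟩
  have hdisj : Disjoint (Ioc a c) (Ico d b) :=
    disjoint_left.2 fun x hx hx' => by linarith [hx.2, hx'.1]
  have hfdb' : IntegrableOn f (Ico d b) := by
    rw [integrableOn_Ico_iff_integrableOn_Ioo]
    exact hfdb.mono_set Ioo_subset_Ioc_self
  rw [hsplit, setIntegral_union hdisj measurableSet_Ico hfac hfdb',
    integral_Ico_eq_integral_Ioc, ← intervalIntegral.integral_of_le hac,
    ← intervalIntegral.integral_of_le hdb,
    intervalIntegral.integral_eq_sub_of_hasDerivAt_of_le hac hFac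
      (fun x hx => hderiv x (Or.inl hx))
      ((intervalIntegrable_iff_integrableOn_Ioc_of_le hac).2 hfac),
    intervalIntegral.integral_eq_sub_of_hasDerivAt_of_le hdb hFdb
      (fun x hx => hderiv x (Or.inr hx))
      ((intervalIntegrable_iff_integrableOn_Ioc_of_le hdb).2 hfdb)]

noncomputable def invSqrtPrimitiveDenom (t x : ℝ) : ℝ :=
  1 - t * x + Real.sqrt (1 - t ^ 2) * Real.sqrt (1 - x ^ 2)

-- `Real.log` is `log |·|`, so this is a primitive on both sides of `t`.
noncomputable def invSqrtPrimitive (t x : ℝ) : ℝ :=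
  (Real.log (x - t) - Real.log (invSqrtPrimitiveDenom t x)) / Real.sqrt (1 - t ^ 2)

theorem invSqrtPrimitive_neg_one (t : ℝ) : invSqrtPrimitive t (-1) = 0 := by
  simp [invSqrtPrimitive, invSqrtPrimitiveDenom, ← Real.log_neg_eq_log (-1 - t), add_comm]

theorem invSqrtPrimitive_one (t : ℝ) : invSqrtPrimitive t 1 = 0 := by
  simp [invSqrtPrimitive, invSqrtPrimitiveDenom]

theorem invSqrtPrimitive_sub_sub_add (t ε : ℝ) :
    invSqrtPrimitive t (t - ε) - invSqrtPrimitive t (t + ε) =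
      (Real.log (invSqrtPrimitiveDenom t (t + ε)) -
        Real.log (invSqrtPrimitiveDenom t (t - ε))) / Real.sqrt (1 - t ^ 2) := by
  simp only [invSqrtPrimitive, sub_sub_cancel_left, add_sub_cancel_left, Real.log_neg_eq_log]
  ring

theorem continuous_invSqrtPrimitiveDenom (t : ℝ) : Continuous (invSqrtPrimitiveDenom t) := by
  unfold invSqrtPrimitiveDenom
  fun_prop

theorem invSqrtPrimitiveDenom_pos {t x : ℝ} (ht : t ∈ Ioo (-1) 1) (hx : x ∈ Icc (-1) 1) :
    0 < invSqrtPrimitiveDenom t x := by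
  obtain ⟨ht₀, ht₁⟩ := ht
  obtain ⟨hx₀, hx₁⟩ := hx
  have htx : t * x < 1 := by
    nlinarith [mul_nonneg (sub_nonneg.2 ht₁.le) (neg_le_iff_add_nonneg.1 hx₀)]
  have := mul_nonneg (Real.sqrt_nonneg (1 - t ^ 2)) (Real.sqrt_nonneg (1 - x ^ 2))
  unfold invSqrtPrimitiveDenom
  linarith

theorem hasDerivAt_invSqrtPrimitive {t x : ℝ} (ht : t ∈ Ioo (-1) 1) (hx : x ∈ Ioo (-1) 1)
    (hxt : x ≠ t) :
    HasDerivAt (invSqrtPrimitive t) (1 / ((x - t) * Real.sqrt (1 - x ^ 2))) x := by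
  set s := Real.sqrt (1 - t ^ 2)
  set σ := Real.sqrt (1 - x ^ 2)
  have hs : 0 < s := Real.sqrt_pos.2 (by nlinarith [ht.1, ht.2])
  have hσ : 0 < σ := Real.sqrt_pos.2 (by nlinarith [hx.1, hx.2])
  have hs2 : s ^ 2 = 1 - t ^ 2 := Real.sq_sqrt (by nlinarith [ht.1, ht.2])
  have hσ2 : σ ^ 2 = 1 - x ^ 2 := Real.sq_sqrt (by nlinarith [hx.1, hx.2])
  have hD := invSqrtPrimitiveDenom_pos ht (Ioo_subset_Icc_self hx)
  have hσ' : HasDerivAt (fun y => Real.sqrt (1 - y ^ 2)) (-(2 * x) / (2 * σ)) x := by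
    simpa using ((hasDerivAt_pow 2 x).const_sub 1).sqrt (by nlinarith [hx.1, hx.2])
  have hD' : HasDerivAt (invSqrtPrimitiveDenom t) (-t + s * (-(2 * x) / (2 * σ))) x :=
    (((hasDerivAt_id x).const_mul t).const_sub 1).add (hσ'.const_mul s) |>.congr_deriv (by simp)
  have hF := ((((hasDerivAt_id x).sub_const t).log (sub_ne_zero.2 hxt)).sub
    (hD'.log hD.ne')).div_const s
  refine hF.congr_deriv ?_
  have hDx : invSqrtPrimitiveDenom t x = 1 - t * x + s * σ := rfl
  rw [hDx] at hD ⊢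
  simp only [id]
  field_simp
  rw [sub_eq_iff_eq_add, ← sub_eq_iff_eq_add', eq_div_iff (by linarith [mul_comm x t])]
  linear_combination s * hσ2 - σ * hs2

theorem continuousOn_invSqrtPrimitive {t a b : ℝ} (ht : t ∈ Ioo (-1) 1) (ha : -1 ≤ a)
    (hb : b ≤ 1) (hta : t ∉ Icc a b) : ContinuousOn (invSqrtPrimitive t) (Icc a b) := by
  refine ((continuousOn_id.sub continuousOn_const).log fun x hx => ?_).sub
    ((continuous_invSqrtPrimitiveDenom t).continuousOn.log fun x hx =>
      (invSqrtPrimitiveDenom_pos ht ⟨ha.trans hx.1, hx.2.trans hb⟩).ne') |>.div_const _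
  exact sub_ne_zero.2 fun h : x = t => hta (h ▸ hx)

theorem integrableOn_Ioc_neg_one_inv_mul_sqrt {t c : ℝ} (ht : t ∈ Ioo (-1) 1) (hct : c < t) :
    IntegrableOn (fun x => 1 / ((x - t) * Real.sqrt (1 - x ^ 2))) (Ioc (-1) c) :=
  integrableOn_deriv_of_nonpos
    (continuousOn_invSqrtPrimitive ht le_rfl (by linarith [ht.2]) fun h => by linarith [h.2])
    (fun x hx => hasDerivAt_invSqrtPrimitive ht ⟨hx.1, by linarith [hx.2, ht.2]⟩
      (by linarith [hx.2]))
    fun x hx => one_div_nonpos.2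
      (mul_nonpos_of_nonpos_of_nonneg (by linarith [hx.2]) (Real.sqrt_nonneg _))

theorem integrableOn_Ioc_one_inv_mul_sqrt {t c : ℝ} (ht : t ∈ Ioo (-1) 1) (htc : t < c) :
    IntegrableOn (fun x => 1 / ((x - t) * Real.sqrt (1 - x ^ 2))) (Ioc c 1) :=
  intervalIntegral.integrableOn_deriv_of_nonneg
    (continuousOn_invSqrtPrimitive ht (by linarith [ht.1]) le_rfl fun h => by linarith [h.1])
    (fun x hx => hasDerivAt_invSqrtPrimitive ht ⟨by linarith [hx.1, ht.1], hx.2⟩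
      (by linarith [hx.1]))
    fun x hx => one_div_nonneg.2 (mul_nonneg (by linarith [hx.1]) (Real.sqrt_nonneg _))

theorem setIntegral_Ioo_diff_Ioo_eq_invSqrtPrimitive_sub {t ε : ℝ} (ht : t ∈ Ioo (-1) 1)
    (hε : 0 < ε) (hε₁ : -1 ≤ t - ε) (hε₂ : t + ε ≤ 1) :
    ∫ x in Ioo (-1) 1 \ Ioo (t - ε) (t + ε), 1 / ((x - t) * Real.sqrt (1 - x ^ 2)) =
      invSqrtPrimitive t (t - ε) - invSqrtPrimitive t (t + ε) := by
  rw [setIntegral_Ioo_diff_Ioo_eq_sub hε₁ (by linarith) hε₂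
    (continuousOn_invSqrtPrimitive ht le_rfl (by linarith) fun h => by linarith [h.2])
    (continuousOn_invSqrtPrimitive ht (by linarith) le_rfl fun h => by linarith [h.1])
    (fun x hx => hasDerivAt_invSqrtPrimitive ht ?_ ?_)
    (integrableOn_Ioc_neg_one_inv_mul_sqrt ht (by linarith))
    (integrableOn_Ioc_one_inv_mul_sqrt ht (by linarith)),
    invSqrtPrimitive_neg_one, invSqrtPrimitive_one]
  · ring
  · rcases hx with hx | hx <;> constructor <;> linarith [hx.1, hx.2]
  · rcases hx with hx | hx <;> intro h <;> linarith [hx.1, hx.2]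

theorem tendsto_invSqrtPrimitive_sub_sub_add {t : ℝ} (ht : t ∈ Ioo (-1) 1) :
    Tendsto (fun ε => invSqrtPrimitive t (t - ε) - invSqrtPrimitive t (t + ε))
      (nhdsWithin 0 (Ioi 0)) (nhds 0) := by
  have hD := (invSqrtPrimitiveDenom_pos ht (Ioo_subset_Icc_self ht)).ne'
  have hcont : ContinuousAt (fun ε => (Real.log (invSqrtPrimitiveDenom t (t + ε)) -
      Real.log (invSqrtPrimitiveDenom t (t - ε))) / Real.sqrt (1 - t ^ 2)) 0 := by
    have := continuous_invSqrtPrimitiveDenom t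
    fun_prop (disch := simpa using hD)
  simp_rw [invSqrtPrimitive_sub_sub_add]
  simpa using hcont.tendsto.mono_left nhdsWithin_le_nhds

/-- Cauchy principal value integral of `1 / ((x - t) * sqrt (1 - x^2))` over `(-1,1)`
equals `0` for `-1 < t < 1`. -/
theorem pv_inv_sqrt_one_sub_sq (t : ℝ) (ht : -1 < t) (ht1 : t < 1) :
    Tendsto
      (fun ε : ℝ =>
        ∫ x in Set.Ioo (-1 : ℝ) 1 \ Set.Ioo (t - ε) (t + ε),
          1 / ((x - t) * Real.sqrt (1 - x ^ 2)))
      (nhdsWithin 0 (Set.Ioi 0)) (nhds 0) := by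
  refine (tendsto_invSqrtPrimitive_sub_sub_add ⟨ht, ht1⟩).congr' ?_
  filter_upwards [Ioo_mem_nhdsGT (lt_min (neg_lt_iff_pos_add'.1 ht) (sub_pos.2 ht1))]
    with ε ⟨hε, hεt⟩
  exact (setIntegral_Ioo_diff_Ioo_eq_invSqrtPrimitive_sub ⟨ht, ht1⟩ hε
    (by linarith [min_le_left (1 + t) (1 - t)])
    (by linarith [min_le_right (1 + t) (1 - t)])).symm
end

section
/- For every t in [-1,1], the integral from t to 1 of sqrt((1-x)/(1+x)) dx equals arccos(t) - sqrt(1-t^2). In particular, taking t = -1, the function x ↦ (1/π) sqrt((1-x)/(1+x)) is a probability density on [-1,1]. -/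
/-!
On `(-1, 1)` the integrand is the derivative of `sqrt (1 - x ^ 2) - arccos x`, a function
continuous on all of `[-1, 1]`. A nonnegative derivative of a continuous function is integrable
even near the singularity at `-1`, so the fundamental theorem of calculus applies on every
`[t, 1]`; at `t = -1` the integral is `arccos (-1) = π`.
-/

open MeasureTheory Set

theorem intervalIntegral.integral_eq_sub_of_hasDerivAt_of_nonneg {g g' : ℝ → ℝ} {a b : ℝ}
    (hab : a ≤ b) (hcont : ContinuousOn g (Icc a b))
    (hderiv : ∀ x ∈ Ioo a b, HasDerivAt g (g' x) x) (hpos : ∀ x ∈ Ioo a b, 0 ≤ g' x) :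
    ∫ x in a..b, g' x = g b - g a :=
  integral_eq_sub_of_hasDerivAt_of_le hab hcont hderiv <|
    (intervalIntegrable_iff_integrableOn_Ioc_of_le hab).2 <|
      integrableOn_deriv_of_nonneg hcont hderiv hpos

namespace Real

theorem sqrt_one_sub_div_one_add {x : ℝ} (h₁ : -1 < x) (h₂ : x < 1) :
    √((1 - x) / (1 + x)) = (1 - x) / √(1 - x ^ 2) := by
  have hsq : 0 < 1 - x ^ 2 := by nlinarith
  have : 1 + x ≠ 0 := by linarith
  rw [eq_div_iff (sqrt_pos.2 hsq).ne', ← sqrt_mul (div_nonneg (by linarith) (by linarith)),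
    show (1 - x) / (1 + x) * (1 - x ^ 2) = (1 - x) ^ 2 by field_simp; ring]
  exact sqrt_sq (by linarith)

theorem hasDerivAt_sqrt_one_sub_sq_sub_arccos {x : ℝ} (h₁ : -1 < x) (h₂ : x < 1) :
    HasDerivAt (fun y ↦ √(1 - y ^ 2) - arccos y) (√((1 - x) / (1 + x))) x := by
  have hsq : 0 < 1 - x ^ 2 := by nlinarith
  have hsqrt : HasDerivAt (fun y ↦ √(1 - y ^ 2)) (1 / (2 * √(1 - x ^ 2)) * -(2 * x ^ 1)) x :=
    (hasDerivAt_sqrt hsq.ne').comp x ((hasDerivAt_pow 2 x).const_sub 1)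
  refine (hsqrt.sub (hasDerivAt_arccos h₁.ne' h₂.ne)).congr_deriv ?_
  have : √(1 - x ^ 2) ≠ 0 := (sqrt_pos.2 hsq).ne'
  rw [sqrt_one_sub_div_one_add h₁ h₂]
  field_simp
  ring

theorem integral_sqrt_one_sub_div_one_add {t : ℝ} (ht : t ∈ Icc (-1 : ℝ) 1) :
    ∫ x in t..1, √((1 - x) / (1 + x)) = arccos t - √(1 - t ^ 2) := by
  have hcont : ContinuousOn (fun y : ℝ ↦ √(1 - y ^ 2) - arccos y) (Icc t 1) := by fun_prop
  rw [intervalIntegral.integral_eq_sub_of_hasDerivAt_of_nonneg ht.2 hcont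
    (fun x hx ↦ hasDerivAt_sqrt_one_sub_sq_sub_arccos (by linarith [ht.1, hx.1]) hx.2)
    (fun _ _ ↦ sqrt_nonneg _)]
  simp [arccos_one]

end Real

/-- For `t ∈ [-1,1]`, `∫_t^1 sqrt((1-x)/(1+x)) dx = arccos t - sqrt(1-t^2)`; in
particular (taking `t = -1`) the function `x ↦ (1/π) sqrt((1-x)/(1+x))` is a
probability density on `[-1,1]`. -/
theorem integral_sqrt_ratio_eq_arccos :
    (∀ t ∈ Set.Icc (-1 : ℝ) 1,
      ∫ x in t..1, Real.sqrt ((1 - x) / (1 + x))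
        = Real.arccos t - Real.sqrt (1 - t ^ 2)) ∧
    ∫ x in (-1 : ℝ)..1, (1 / Real.pi) * Real.sqrt ((1 - x) / (1 + x)) = 1 := by
  refine ⟨fun t ht ↦ Real.integral_sqrt_one_sub_div_one_add ht, ?_⟩
  rw [intervalIntegral.integral_const_mul,
    Real.integral_sqrt_one_sub_div_one_add (by norm_num : (-1 : ℝ) ∈ Icc (-1) 1)]
  simp [Real.arccos_neg_one, Real.pi_ne_zero]
end

section
/- For every x in [-1,1], the integral over s in (-1,1) of log|x-s| / (π sqrt(1-s^2)) ds equals -log 2. (Equivalently, the arcsine measure is the equilibrium measure for zero potential on [-1,1], with Euler–Lagrange constant ℓ = 2 log 2.) -/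
/-!
Substituting `s = cos θ` turns the potential at `x = cos a` into `π⁻¹ ∫_0^π log |cos a - cos θ| dθ`.
Since `cos a - cos θ = 2 sin ((θ + a) / 2) sin ((θ - a) / 2)`, the integral over the full period
`[-π, π]` splits into `2π log 2` plus two integrals of `log ∘ sin` over intervals of length `π`,
each equal to `-π log 2` by `π`-periodicity; evenness in `θ` then halves the result.
-/

open MeasureTheory Set

open Real

open scoped Interval

theorem Function.Even.intervalIntegral_neg_eq_two_smul {E : Type*} [NormedAddCommGroup E]
    [NormedSpace ℝ E] {f : ℝ → E} {a : ℝ} (hf : f.Even)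
    (hi : IntervalIntegrable f volume (-a) a) :
    ∫ x in -a..a, f x = (2 : ℝ) • ∫ x in 0..a, f x := by
  have hmem : (0 : ℝ) ∈ [[-a, a]] := by
    rw [mem_uIcc]; rcases le_total 0 a with h | h
    · exact Or.inl ⟨by linarith, h⟩
    · exact Or.inr ⟨h, by linarith⟩
  have hneg : ∫ x in -a..0, f x = ∫ x in 0..a, f x := by
    simpa [show ∀ x, f (-x) = f x from hf] using
      (intervalIntegral.integral_comp_neg (a := 0) (b := a) f).symm
  rw [← intervalIntegral.integral_add_adjacent_intervals (b := 0)
    (hi.mono_set (uIcc_subset_uIcc_left hmem)) (hi.mono_set (uIcc_subset_uIcc_right hmem)),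
    hneg, two_smul]

namespace Real

theorem periodic_log_sin : Function.Periodic (fun x => log (sin x)) π := fun x => by
  simp [sin_add_pi, log_neg_eq_log]

theorem integral_log_sin_add_pi (t : ℝ) : ∫ x in t..t + π, log (sin x) = -log 2 * π := by
  rw [periodic_log_sin.intervalIntegral_add_eq t 0, zero_add, integral_log_sin_zero_pi]

theorem integral_log_sin_half_add (c : ℝ) :
    ∫ θ in -π..π, log (sin (θ / 2 + c)) = -(2 * π * log 2) := by
  rw [intervalIntegral.integral_comp_div_add (fun x => log (sin x)) two_ne_zero c,
    show π / 2 + c = -π / 2 + c + π by ring, integral_log_sin_add_pi, smul_eq_mul]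
  ring

theorem intervalIntegrable_log_sin_half_add (c : ℝ) {a b : ℝ} :
    IntervalIntegrable (fun θ => log (sin (θ / 2 + c))) volume a b := by
  simpa using (AnalyticOnNhd.meromorphicOn (f := fun θ : ℝ => sin (θ / 2 + c))
    (fun _ _ => by fun_prop) (U := uIcc a b)).intervalIntegrable_log_norm

theorem ae_sin_half_add_ne_zero (c : ℝ) : ∀ᵐ θ : ℝ, sin (θ / 2 + c) ≠ 0 := by
  refine ae_iff.2 (measure_mono_null (fun θ hθ => ?_)
    ((countable_range fun n : ℤ => 2 * (n * π - c)).measure_zero _))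
  obtain ⟨n, hn⟩ := sin_eq_zero_iff.1 (not_not.1 hθ)
  exact ⟨n, by linarith⟩

theorem cos_sub_cos_eq_two_mul_sin_mul_sin (a θ : ℝ) :
    cos a - cos θ = 2 * sin (θ / 2 + a / 2) * sin (θ / 2 - a / 2) := by
  rw [cos_sub_cos, show (a - θ) / 2 = -(θ / 2 - a / 2) by ring,
    show (a + θ) / 2 = θ / 2 + a / 2 by ring, sin_neg]
  ring

theorem integral_log_abs_cos_sub_cos_neg_pi_pi (a : ℝ) :
    ∫ θ in -π..π, log |cos a - cos θ| = -(2 * π * log 2) := by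
  have hae : ∀ᵐ θ, θ ∈ Ι (-π) π → log |cos a - cos θ| =
      log 2 + log (sin (θ / 2 + a / 2)) + log (sin (θ / 2 + -(a / 2))) := by
    filter_upwards [ae_sin_half_add_ne_zero (a / 2), ae_sin_half_add_ne_zero (-(a / 2))]
      with θ h₁ h₂ _
    rw [cos_sub_cos_eq_two_mul_sin_mul_sin, ← sub_eq_add_neg, log_abs,
      log_mul (mul_ne_zero two_ne_zero h₁) (by rwa [sub_eq_add_neg]), log_mul two_ne_zero h₁]
  rw [intervalIntegral.integral_congr_ae hae, intervalIntegral.integral_add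
    (intervalIntegrable_const.add (intervalIntegrable_log_sin_half_add _))
    (intervalIntegrable_log_sin_half_add _), intervalIntegral.integral_add intervalIntegrable_const
    (intervalIntegrable_log_sin_half_add _), intervalIntegral.integral_const,
    integral_log_sin_half_add, integral_log_sin_half_add, smul_eq_mul]
  ring

theorem integral_log_abs_cos_sub_cos_zero_pi (a : ℝ) :
    ∫ θ in 0..π, log |cos a - cos θ| = -(π * log 2) := by
  have hi : IntervalIntegrable (fun θ => log |cos a - cos θ|) volume (-π) π := by
    simpa using (AnalyticOnNhd.meromorphicOn (f := fun θ : ℝ => cos a - cos θ)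
      (fun _ _ => by fun_prop) (U := uIcc (-π) π)).intervalIntegrable_log_norm
  have h := Function.Even.intervalIntegral_neg_eq_two_smul (fun θ => by simp) hi
  rw [integral_log_abs_cos_sub_cos_neg_pi_pi, smul_eq_mul] at h
  linarith

theorem integral_Ioo_div_sqrt_one_sub_sq (f : ℝ → ℝ) :
    ∫ s in Ioo (-1 : ℝ) 1, f s / √(1 - s ^ 2) = ∫ θ in 0..π, f (cos θ) := by
  have hcov := integral_image_eq_integral_abs_deriv_smul measurableSet_Ioo
    (fun θ _ => (hasDerivAt_cos θ).hasDerivWithinAt) (injOn_cos.mono Ioo_subset_Icc_self)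
    (fun s => f s / √(1 - s ^ 2))
  rw [show cos '' Ioo 0 π = Ioo (-1) 1 from cosPartialHomeomorph.image_source_eq_target] at hcov
  rw [hcov, intervalIntegral.integral_of_le pi_pos.le, integral_Ioc_eq_integral_Ioo]
  refine setIntegral_congr_fun measurableSet_Ioo fun θ hθ => ?_
  have hsin : 0 < sin θ := sin_pos_of_mem_Ioo hθ
  rw [← sin_sq, sqrt_sq hsin.le, abs_neg, abs_of_pos hsin, smul_eq_mul, mul_div_cancel₀ _ hsin.ne']

end Real

/-- The logarithmic potential of the arcsine measure on `[-1,1]` is constant equal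
to `-log 2` on `[-1,1]`: the arcsine measure is the equilibrium measure for zero
potential, with Euler–Lagrange constant `ℓ = 2 log 2`. -/
theorem arcsine_log_potential (x : ℝ) (hx : x ∈ Set.Icc (-1 : ℝ) 1) :
    ∫ s in Set.Ioo (-1 : ℝ) 1,
        Real.log |x - s| / (Real.pi * Real.sqrt (1 - s ^ 2))
      = -Real.log 2 := by
  obtain ⟨a, rfl⟩ : ∃ a, cos a = x := ⟨arccos x, cos_arccos hx.1 hx.2⟩
  simp_rw [div_mul_eq_div_div]
  rw [integral_Ioo_div_sqrt_one_sub_sq (fun s => log |cos a - s| / π),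
    intervalIntegral.integral_div, integral_log_abs_cos_sub_cos_zero_pi]
  field_simp
end

section
/- For the Laguerre-type potential V(x) = 2(x+1) with equilibrium measure dμ(s) = (1/π) sqrt((1-s)/(1+s)) ds on [-1,1], the Euler–Lagrange inequality is strict off the support: for every real x > 1, 2 ∫_{-1}^{1} log|x-s| dμ(s) < 2(x+1) - (2 + 2 log 2). -/
open MeasureTheory Filter Set

/-!
Substituting `s = cos θ` turns the density into `(1 - cos θ) / π` on `(0, π)`. From `log y < y - 1`
one gets `a log b < a log a + (b - a)` for `0 < a < b`; with `a = 1 - cos θ`, `b = x - cos θ` this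
bounds the integrand by `(1 - cos θ) log (1 - cos θ) + (x - 1)`, whose integral over `(0, π)` is
`π (1 - log 2) + π (x - 1)` by the half-angle formula `1 - cos θ = 2 sin² (θ / 2)` and the classical
value `∫₀^{π/2} log sin = -(π / 2) log 2`.
-/

open Real

theorem Real.mul_log_lt_mul_log_add_sub {a b : ℝ} (ha : 0 < a) (hab : a < b) :
    a * log b < a * log a + (b - a) := by
  have hb : 0 < b := ha.trans hab
  have h := log_lt_sub_one_of_pos (div_pos hb ha) (div_ne_one_of_ne hab.ne')
  rw [log_div hb.ne' ha.ne'] at h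
  have := mul_lt_mul_of_pos_left h ha
  rw [mul_sub, mul_sub, mul_div_cancel₀ b ha.ne'] at this
  linarith

theorem Real.image_cos_Ioo : cos '' Ioo 0 π = Ioo (-1) 1 :=
  cosPartialHomeomorph.image_source_eq_target

theorem MeasureTheory.integral_Ioo_neg_one_one_eq_integral_sin_mul_comp_cos (g : ℝ → ℝ) :
    ∫ s in Ioo (-1) 1, g s = ∫ θ in Ioo 0 π, sin θ * g (cos θ) := by
  rw [← image_cos_Ioo, integral_image_eq_integral_abs_deriv_smul measurableSet_Ioo
    (fun θ _ => (hasDerivAt_cos θ).hasDerivWithinAt) (injOn_cos.mono Ioo_subset_Icc_self)]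
  refine setIntegral_congr_fun measurableSet_Ioo fun θ hθ => ?_
  rw [abs_neg, abs_of_pos (sin_pos_of_pos_of_lt_pi hθ.1 hθ.2), smul_eq_mul]

theorem Real.sin_mul_sqrt_one_sub_cos_div_one_add_cos {θ : ℝ} (hθ : θ ∈ Ioo 0 π) :
    sin θ * √((1 - cos θ) / (1 + cos θ)) = 1 - cos θ := by
  obtain ⟨hc₁, hc₂⟩ := mapsTo_cos_Ioo hθ
  have h₁ : 0 < 1 + cos θ := by linarith
  rw [sin_eq_sqrt_one_sub_cos_sq hθ.1.le hθ.2.le, ← sqrt_mul (by nlinarith),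
    show (1 - cos θ ^ 2) * ((1 - cos θ) / (1 + cos θ)) = (1 - cos θ) ^ 2 by field_simp; ring,
    sqrt_sq (by linarith)]

theorem integral_cos_two_mul_mul_log_sin :
    ∫ u in 0..π / 2, cos (2 * u) * log (sin u) = -(π / 4) := by
  -- `ψ` is continuous at `0` because it is built from `x ↦ x log x`.
  let ψ : ℝ → ℝ := fun u => cos u * (sin u * log (sin u)) - u / 2 - sin (2 * u) / 4
  have hψ : ∀ u ∈ Ioo 0 (π / 2), HasDerivAt ψ (cos (2 * u) * log (sin u)) u := by
    intro u hu
    have hs : sin u ≠ 0 := (sin_pos_of_pos_of_lt_pi hu.1 (by linarith [hu.2, pi_pos])).ne'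
    have := (((hasDerivAt_cos u).mul ((hasDerivAt_mul_log hs).comp u (hasDerivAt_sin u))).sub
      ((hasDerivAt_id u).div_const 2)).sub
      (((hasDerivAt_sin (2 * u)).comp u ((hasDerivAt_id u).const_mul 2)).div_const 4)
    refine this.congr_deriv ?_
    simp only [Function.comp_apply, cos_two_mul]
    linear_combination -log (sin u) * sin_sq_add_cos_sq u
  have hint : IntervalIntegrable (fun u => cos (2 * u) * log (sin u)) volume 0 (π / 2) :=
    intervalIntegrable_log_sin.continuousOn_mul (by fun_prop)
  rw [intervalIntegral.integral_eq_sub_of_hasDerivAt_of_le (by positivity) (by fun_prop) hψ hint]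
  simp [ψ, show 2 * (π / 2) = π by ring]
  ring

theorem integral_one_sub_cos_mul_log_one_sub_cos :
    ∫ θ in 0..π, (1 - cos θ) * log (1 - cos θ) = π * (1 - log 2) := by
  have half_angle : ∀ u, (1 - cos (2 * u)) * log (1 - cos (2 * u))
      = (1 - cos (2 * u)) * log 2 + 2 * log (sin u) - 2 * (cos (2 * u) * log (sin u)) := by
    intro u
    -- holds also where `sin u = 0`, as both sides vanish there (`log 0 = 0`)
    rw [cos_two_mul, cos_sq']
    rcases eq_or_ne (sin u) 0 with hs | hs
    · norm_num [hs]
    · rw [show 1 - (2 * (1 - sin u ^ 2) - 1) = 2 * sin u ^ 2 by ring, log_mul two_ne_zero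
        (pow_ne_zero 2 hs), log_pow]
      push_cast
      ring
  have h := intervalIntegral.integral_comp_mul_left (a := 0) (b := π / 2)
    (fun θ => (1 - cos θ) * log (1 - cos θ)) two_ne_zero
  simp only [half_angle, mul_zero, show 2 * (π / 2) = π by ring, smul_eq_mul] at h
  have h₁ : IntervalIntegrable (fun u => (1 - cos (2 * u)) * log 2) volume 0 (π / 2) :=
    (by fun_prop : Continuous _).intervalIntegrable _ _
  have h₂ : IntervalIntegrable (fun u => 2 * log (sin u)) volume 0 (π / 2) :=
    intervalIntegrable_log_sin.const_mul 2
  have h₃ : IntervalIntegrable (fun u => 2 * (cos (2 * u) * log (sin u))) volume 0 (π / 2) :=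
    (intervalIntegrable_log_sin.continuousOn_mul (by fun_prop)).const_mul 2
  have hcos : ∫ u in 0..π / 2, (1 - cos (2 * u)) = π / 2 := by
    rw [intervalIntegral.integral_sub intervalIntegrable_const
        ((by fun_prop : Continuous fun u => cos (2 * u)).intervalIntegrable _ _),
      intervalIntegral.integral_comp_mul_left (fun u => cos u) two_ne_zero]
    simp [show 2 * (π / 2) = π by ring]
  rw [intervalIntegral.integral_sub (h₁.add h₂) h₃, intervalIntegral.integral_add h₁ h₂,
    intervalIntegral.integral_const_mul, intervalIntegral.integral_const_mul,
    intervalIntegral.integral_mul_const, integral_log_sin_zero_pi_div_two,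
    integral_cos_two_mul_mul_log_sin, hcos] at h
  linarith

theorem integral_one_sub_cos_mul_log_sub_cos_lt {x : ℝ} (hx : 1 < x) :
    ∫ θ in 0..π, (1 - cos θ) * log (x - cos θ) < π * (x - log 2) := by
  have hxc : ∀ θ, x - cos θ ≠ 0 := fun θ => by linarith [cos_le_one θ]
  have hlt : ∀ θ ∈ Ioc 0 π,
      (1 - cos θ) * log (x - cos θ) < (1 - cos θ) * log (1 - cos θ) + (x - 1) := by
    intro θ hθ
    have hc : cos θ < 1 := cos_zero ▸ cos_lt_cos_of_nonneg_of_le_pi le_rfl hθ.2 hθ.1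
    linarith [mul_log_lt_mul_log_add_sub (sub_pos.2 hc) (by linarith : 1 - cos θ < x - cos θ)]
  have hcont : Continuous fun θ => (1 - cos θ) * log (1 - cos θ) :=
    continuous_mul_log.comp (by fun_prop)
  calc ∫ θ in 0..π, (1 - cos θ) * log (x - cos θ)
      < ∫ θ in 0..π, ((1 - cos θ) * log (1 - cos θ) + (x - 1)) :=
        intervalIntegral.integral_lt_integral_of_continuousOn_of_le_of_exists_lt pi_pos
          (by fun_prop (disch := exact hxc _))
          (hcont.add continuous_const).continuousOn
          (fun θ hθ => (hlt θ hθ).le) ⟨π, right_mem_Icc.2 pi_pos.le, hlt π ⟨pi_pos, le_rfl⟩⟩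
    _ = π * (x - log 2) := by
        rw [intervalIntegral.integral_add (hcont.intervalIntegrable _ _) intervalIntegrable_const,
          integral_one_sub_cos_mul_log_one_sub_cos,
          intervalIntegral.integral_const, smul_eq_mul]
        ring

/-- Strict Euler–Lagrange inequality off the support for the Laguerre-type
potential `V(x) = 2(x+1)` with equilibrium density `(1/π) sqrt((1-s)/(1+s))`:
for every real `x > 1`,
`2 ∫ log|x-s| dμ(s) < 2(x+1) - (2 + 2 log 2)`. -/
theorem laguerre_equilibrium_strict_inequality (x : ℝ) (hx : 1 < x) :
    2 * ∫ s in Set.Ioo (-1 : ℝ) 1,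
        Real.log |x - s| * ((1 / Real.pi) * Real.sqrt ((1 - s) / (1 + s)))
      < 2 * (x + 1) - (2 + 2 * Real.log 2) := by
  have hdensity : ∀ θ ∈ Ioo 0 π,
      sin θ * (log |x - cos θ| * (1 / π * √((1 - cos θ) / (1 + cos θ))))
        = π⁻¹ * ((1 - cos θ) * log (x - cos θ)) := by
    intro θ hθ
    conv_rhs => rw [← sin_mul_sqrt_one_sub_cos_div_one_add_cos hθ]
    rw [abs_of_pos (by linarith [cos_le_one θ])]
    ring
  rw [integral_Ioo_neg_one_one_eq_integral_sin_mul_comp_cos,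
    setIntegral_congr_fun measurableSet_Ioo hdensity, integral_const_mul,
    ← integral_Ioc_eq_integral_Ioo, ← intervalIntegral.integral_of_le pi_pos.le]
  calc 2 * (π⁻¹ * ∫ θ in 0..π, (1 - cos θ) * log (x - cos θ))
      < 2 * (π⁻¹ * (π * (x - log 2))) := by
        gcongr
        exact integral_one_sub_cos_mul_log_sub_cos_lt hx
    _ = 2 * (x + 1) - (2 + 2 * log 2) := by
        field_simp
        ring
end

section
/- For every real z > 0, the integral from 0 to z of x · d/dx [log Γ(1 + x/2) - log Γ(1 + x)] dx equals -z^2/4 + log( G(1 + z/2)^2 / G(1 + z) ), where G is Barnes' G-function. -/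
/-!
Integrating by parts, the left-hand side is `z f(z) - ∫₀ᶻ f` with
`f(y) = log Γ(1 + y/2) - log Γ(1 + y)`, so the theorem reduces to the classical formula
`log G(1 + z) = z/2 · log 2π - z(z+1)/2 + z log Γ(1 + z) - ∫₀ᶻ log Γ(1 + x) dx`.
To prove it, take logarithms in the Weierstrass product of `Γ`:
`log Γ(1 + y) + γ y = ∑ₖ tₖ(y)` with `tₖ(y) = y/(k+1) - log(1 + y/(k+1))`.
The logarithm `bₖ` of the `k`-th factor of Barnes' product satisfies
`(y tₖ(y) - bₖ(y))' = tₖ(y)`, so integrating the series termwise over `[0, z]` (it is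
dominated by `z²/(k+1)²`) expresses `∑ₖ bₖ(z)` through `log Γ(1 + z)` and `∫₀ᶻ log Γ(1 + x) dx`.
-/

open MeasureTheory Filter Set

/-- Barnes' G-function, defined via its Weierstrass product. It satisfies
`G(1) = 1` and `G(z+1) = Γ(z) G(z)`. -/
noncomputable def barnesG (x : ℝ) : ℝ :=
  (2 * Real.pi) ^ ((x - 1) / 2) *
    Real.exp (-((x - 1) + (x - 1) ^ 2 * (1 + Real.eulerMascheroniConstant)) / 2) *
    ∏' k : ℕ, ((1 + (x - 1) / ((k : ℝ) + 1)) ^ (k + 1) *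
      Real.exp ((x - 1) ^ 2 / (2 * ((k : ℝ) + 1)) - (x - 1)))

open Real intervalIntegral

theorem Complex.contDiffAt_Gamma {n : WithTop ℕ∞} {s : ℂ} (hs : ∀ m : ℕ, s ≠ -m) :
    ContDiffAt ℂ n Gamma s := by
  have h := (differentiable_one_div_Gamma.contDiff (n := n)).contDiffAt.inv
    (inv_ne_zero (Gamma_ne_zero hs))
  rwa [show (fun s => (Gamma s)⁻¹)⁻¹ = Gamma from funext fun _ => inv_inv _] at h

theorem Real.contDiffAt_Gamma {n : WithTop ℕ∞} {s : ℝ} (hs : ∀ m : ℕ, s ≠ -m) :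
    ContDiffAt ℝ n Gamma s :=
  (Complex.contDiffAt_Gamma fun m => by exact_mod_cast hs m).real_of_complex

theorem Real.contDiffOn_log_Gamma {n : WithTop ℕ∞} :
    ContDiffOn ℝ n (fun s => log (Gamma s)) (Ioi 0) := fun s hs =>
  ((contDiffAt_Gamma fun m => by linarith [mem_Ioi.mp hs, (m.cast_nonneg : (0:ℝ) ≤ m)]).log
    (Gamma_pos_of_pos hs).ne').contDiffWithinAt

theorem intervalIntegral.integral_id_mul_deriv {f : ℝ → ℝ} {a b : ℝ}
    (hf : ∀ x ∈ uIcc a b, DifferentiableAt ℝ f x)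
    (hf' : IntervalIntegrable (deriv f) volume a b) :
    ∫ x in a..b, x * deriv f x = b * f b - a * f a - ∫ x in a..b, f x := by
  simpa using integral_mul_deriv_eq_deriv_mul (fun x _ => hasDerivAt_id x)
    (fun x hx => (hf x hx).hasDerivAt) intervalIntegrable_const hf'

theorem contDiffOn_log_Gamma_one_add {n : WithTop ℕ∞} :
    ContDiffOn ℝ n (fun x => log (Gamma (1 + x))) (Ioi (-1)) :=
  contDiffOn_log_Gamma.comp (by fun_prop) fun x hx => by
    simp only [mem_Ioi] at hx ⊢; linarith

local notation "γ" => eulerMascheroniConstant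

noncomputable def weierstrassTerm (k : ℕ) (y : ℝ) : ℝ := y / (k + 1) - log (1 + y / (k + 1))

noncomputable def barnesTerm (k : ℕ) (y : ℝ) : ℝ :=
  (k + 1) * log (1 + y / (k + 1)) + y ^ 2 / (2 * (k + 1)) - y

section

variable (k : ℕ) {y : ℝ}

lemma one_add_div_succ_pos (hy : -1 < y) : 0 < 1 + y / ((k : ℝ) + 1) := by
  have : 0 < (k : ℝ) + 1 + y := by linarith [k.cast_nonneg (α := ℝ)]
  rw [one_add_div (by positivity)]
  positivity

lemma weierstrassTerm_nonneg (hy : -1 < y) : 0 ≤ weierstrassTerm k y := by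
  have := log_le_sub_one_of_pos (one_add_div_succ_pos k hy)
  rw [weierstrassTerm]; linarith

lemma weierstrassTerm_le (hy : 0 ≤ y) : weierstrassTerm k y ≤ y ^ 2 / ((k : ℝ) + 1) ^ 2 := by
  set t := y / ((k : ℝ) + 1)
  have ht : 0 ≤ t := by positivity
  have hlog := one_sub_inv_le_log_of_pos (by positivity : 0 < 1 + t)
  have hinv : 1 - (1 + t)⁻¹ = t - t ^ 2 / (1 + t) := by field_simp; ring
  have hquot : t ^ 2 / (1 + t) ≤ t ^ 2 := div_le_self (by positivity) (by linarith)
  rw [weierstrassTerm, ← div_pow]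
  linarith

lemma exp_barnesTerm (hy : -1 < y) :
    exp (barnesTerm k y)
      = (1 + y / ((k : ℝ) + 1)) ^ (k + 1) * exp (y ^ 2 / (2 * (k + 1)) - y) := by
  rw [barnesTerm, add_sub_assoc, exp_add, ← exp_log (one_add_div_succ_pos k hy), ← exp_nat_mul,
    exp_log (one_add_div_succ_pos k hy)]
  push_cast; rfl

lemma hasDerivAt_mul_weierstrassTerm_sub_barnesTerm (hy : -1 < y) :
    HasDerivAt (fun u => u * weierstrassTerm k u - barnesTerm k u) (weierstrassTerm k y) y := by
  have hpos := one_add_div_succ_pos k hy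
  have hlog : HasDerivAt (fun u => log (1 + u / ((k : ℝ) + 1)))
      (1 / (k + 1) / (1 + y / (k + 1))) y :=
    (((hasDerivAt_id y).div_const _).const_add 1).log hpos.ne'
  have hW : HasDerivAt (weierstrassTerm k) (1 / (k + 1) - 1 / (k + 1) / (1 + y / (k + 1))) y :=
    ((hasDerivAt_id y).div_const ((k : ℝ) + 1)).sub hlog
  have hB : HasDerivAt (barnesTerm k)
      ((k + 1) * (1 / (k + 1) / (1 + y / (k + 1))) + 2 * y / (2 * (k + 1)) - 1) y := by
    have := (hlog.const_mul ((k : ℝ) + 1)).add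
      ((hasDerivAt_pow 2 y).div_const (2 * ((k : ℝ) + 1)))
    exact (this.sub (hasDerivAt_id y)).congr_deriv (by norm_num)
  refine (((hasDerivAt_id y).mul hW).sub hB).congr_deriv ?_
  have hc : (k : ℝ) + 1 ≠ 0 := by positivity
  have hky : (k : ℝ) + 1 + y ≠ 0 := by linarith [k.cast_nonneg (α := ℝ)]
  simp only [id]
  field_simp
  ring

lemma sum_range_weierstrassTerm (hy : -1 < y) (n : ℕ) :
    ∑ k ∈ Finset.range n, weierstrassTerm k y
      = y * harmonic n + log n.factorial - ∑ k ∈ Finset.range n, log (1 + y + k) := by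
  induction n with
  | zero => simp
  | succ n ih =>
    have hn : (n : ℝ) + 1 ≠ 0 := by positivity
    have hyn : 1 + y + n ≠ 0 := by linarith [n.cast_nonneg (α := ℝ)]
    have hfac : 1 + y / ((n : ℝ) + 1) = (1 + y + n) / (n + 1) := by field_simp; ring
    rw [Finset.sum_range_succ, ih, Finset.sum_range_succ, harmonic_succ, Nat.factorial_succ,
      Nat.cast_mul, log_mul (by exact_mod_cast n.succ_ne_zero) (by positivity), weierstrassTerm,
      hfac, log_div hyn hn]
    push_cast
    ring

theorem hasSum_weierstrassTerm (hy : -1 < y) :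
    HasSum (fun k => weierstrassTerm k y) (log (Gamma (1 + y)) + γ * y) := by
  rw [hasSum_iff_tendsto_nat_of_nonneg (fun k => weierstrassTerm_nonneg k hy),
    ← tendsto_add_atTop_iff_nat 1]
  have hpartial (n : ℕ) : ∑ k ∈ Finset.range (n + 1), weierstrassTerm k y
      = y * (harmonic (n + 1) - log ↑(n + 1)) + BohrMollerup.logGammaSeq (1 + y) n
        + (1 + y) * (log (n + 1) - log n) := by
    rw [sum_range_weierstrassTerm hy, BohrMollerup.logGammaSeq, Finset.sum_range_succ,
      Nat.factorial_succ, Nat.cast_mul, log_mul (by exact_mod_cast n.succ_ne_zero) (by positivity)]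
    push_cast
    ring
  have hlim := (((tendsto_add_atTop_iff_nat 1).mpr tendsto_harmonic_sub_log).const_mul y).add
    (BohrMollerup.tendsto_log_gamma (by linarith : 0 < 1 + y)) |>.add
    (tendsto_log_nat_add_one_sub_log.const_mul (1 + y))
  rw [mul_zero, add_zero, add_comm (y * γ), mul_comm y] at hlim
  exact hlim.congr fun n => (hpartial n).symm

lemma continuousOn_weierstrassTerm : ContinuousOn (weierstrassTerm k) (Ioi (-1)) := fun y hy =>
  ((continuous_id.div_const _).continuousAt.sub
    ((by fun_prop : Continuous fun u : ℝ => 1 + u / ((k : ℝ) + 1)).continuousAt.log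
      (one_add_div_succ_pos k hy).ne')).continuousWithinAt

lemma integral_weierstrassTerm {z : ℝ} (hz : -1 < z) :
    ∫ x in (0 : ℝ)..z, weierstrassTerm k x = z * weierstrassTerm k z - barnesTerm k z := by
  have hsub : uIcc 0 z ⊆ Ioi (-1) := ordConnected_Ioi.uIcc_subset (by norm_num) hz
  rw [integral_eq_sub_of_hasDerivAt
    (fun x hx => hasDerivAt_mul_weierstrassTerm_sub_barnesTerm k (hsub hx))
    ((continuousOn_weierstrassTerm k).mono hsub).intervalIntegrable]
  simp [weierstrassTerm, barnesTerm]

end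

theorem hasSum_integral_log_Gamma {z : ℝ} (hz : 0 ≤ z) :
    HasSum (fun k => z * weierstrassTerm k z - barnesTerm k z)
      (∫ x in (0 : ℝ)..z, (log (Gamma (1 + x)) + γ * x)) := by
  simp_rw [← integral_weierstrassTerm _ (by linarith : -1 < z)]
  have hsummable : Summable fun k : ℕ => z ^ 2 / ((k : ℝ) + 1) ^ 2 := by
    refine (((summable_nat_add_iff 1).mpr
      (Real.summable_one_div_nat_pow.mpr one_lt_two)).mul_left (z ^ 2)).congr fun k => ?_
    push_cast
    ring
  refine hasSum_integral_of_dominated_convergence (fun k _ => z ^ 2 / ((k : ℝ) + 1) ^ 2)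
    (fun k => (by unfold weierstrassTerm; fun_prop : Measurable (weierstrassTerm k))
      |>.aestronglyMeasurable)
    (fun k => ae_of_all _ fun x hx => ?_) (ae_of_all _ fun _ _ => hsummable)
    intervalIntegrable_const (ae_of_all _ fun x hx => hasSum_weierstrassTerm ?_)
  · rw [uIoc_of_le hz] at hx
    rw [norm_of_nonneg (weierstrassTerm_nonneg k (by linarith [hx.1]))]
    refine (weierstrassTerm_le k hx.1.le).trans ?_
    gcongr <;> linarith [hx.1, hx.2]
  · rw [uIoc_of_le hz] at hx
    linarith [hx.1]

theorem hasSum_barnesTerm {z : ℝ} (hz : 0 ≤ z) :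
    HasSum (fun k => barnesTerm k z)
      (z * (log (Gamma (1 + z)) + γ * z)
        - ∫ x in (0 : ℝ)..z, (log (Gamma (1 + x)) + γ * x)) :=
  ((hasSum_weierstrassTerm (by linarith)).mul_left z |>.sub (hasSum_integral_log_Gamma hz))
    |>.congr_fun fun k => by ring

theorem barnesG_one_add {z : ℝ} (hz : 0 ≤ z) :
    barnesG (1 + z) = exp (z / 2 * log (2 * π) - z * (z + 1) / 2 + z * log (Gamma (1 + z))
      - ∫ x in (0 : ℝ)..z, log (Gamma (1 + x))) := by
  have hprod := (hasSum_barnesTerm hz).rexp.congr_fun fun k =>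
    (exp_barnesTerm k (by linarith : -1 < z)).symm
  have hint : IntervalIntegrable (fun x => log (Gamma (1 + x))) volume 0 z :=
    (contDiffOn_log_Gamma_one_add (n := 0)).continuousOn.mono
      (ordConnected_Ioi.uIcc_subset (by norm_num) (mem_Ioi.mpr (by linarith))) |>.intervalIntegrable
  rw [barnesG, add_sub_cancel_left, hprod.tprod_eq, rpow_def_of_pos (by positivity), ← exp_add,
    ← exp_add, integral_add hint ((continuous_const_mul γ).intervalIntegrable _ _),
    intervalIntegral.integral_const_mul, integral_id]
  congr 1
  ring

/-- For `z > 0`,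
`∫_0^z x · d/dx [log Γ(1+x/2) - log Γ(1+x)] dx = -z²/4 + log(G(1+z/2)²/G(1+z))`. -/
theorem integral_x_mul_deriv_log_Gamma_ratio (z : ℝ) (hz : 0 < z) :
    ∫ x in (0 : ℝ)..z,
        x * deriv (fun y => Real.log (Real.Gamma (1 + y / 2))
          - Real.log (Real.Gamma (1 + y))) x
      = -z ^ 2 / 4 + Real.log (barnesG (1 + z / 2) ^ 2 / barnesG (1 + z)) := by
  set g : ℝ → ℝ := fun x => log (Gamma (1 + x))
  have hg : ContDiffOn ℝ 1 g (Ioi (-1)) := contDiffOn_log_Gamma_one_add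
  have hg_half : ContDiffOn ℝ 1 (fun x => g (x / 2)) (Ioi (-1)) :=
    hg.comp (by fun_prop) fun x hx => by simp only [mem_Ioi] at hx ⊢; linarith
  have hf := hg_half.sub hg
  have hsub : uIcc 0 z ⊆ Ioi (-1) :=
    ordConnected_Ioi.uIcc_subset (by norm_num) (mem_Ioi.mpr (by linarith))
  rw [integral_id_mul_deriv
      (fun x hx => (hf.contDiffAt (isOpen_Ioi.mem_nhds (hsub hx))).differentiableAt one_ne_zero)
      ((hf.continuousOn_deriv_of_isOpen isOpen_Ioi le_rfl).mono hsub).intervalIntegrable,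
    integral_sub (hg_half.continuousOn.mono hsub).intervalIntegrable
      (hg.continuousOn.mono hsub).intervalIntegrable,
    integral_comp_div g two_ne_zero, barnesG_one_add (by positivity), barnesG_one_add hz.le,
    ← exp_nat_mul, ← exp_sub, log_exp]
  simp only [g, zero_div, smul_eq_mul, zero_mul, sub_zero]
  push_cast
  ring
end

section
/- Fix real α > 0 and real β with |β| < 1 + α/2. Then the integral from 0 to β of [ (α/2) d/dx log( Γ(1 + α/2 - x) Γ(1 + α/2 + x) ) + x d/dx log( Γ(1 + α/2 + x) / Γ(1 + α/2 - x) ) - 2x ] dx equals log( G(1 + α/2 + β) G(1 + α/2 - β) / G(1 + α/2)^2 ). -/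
open MeasureTheory Filter Set

/-!
Taking logarithms in the Weierstrass products,
`log Γ(1 + t) = -γ t + ∑ₖ (t/(k+1) - log (1 + t/(k+1)))` (via the Euler limit formula), and
`log G(1 + t)` is a quadratic polynomial plus `∑ₖ ((k+1) log (1 + t/(k+1)) + t²/(2(k+1)) - t)`.
Termwise, the derivative of the `k`-th Barnes term is `t` times that of the `k`-th Gamma term,
whence `(log G)'(z) = log (2π)/2 - 1/2 - (z - 1) + (z - 1) ψ(z)`. With `c = 1 + α/2` the
integrand is therefore the derivative of `log G(c + x) + log G(c - x)`, and the fundamental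
theorem of calculus concludes.
-/

open Real Topology
open scoped Nat

noncomputable section

def logGammaTerm (k : ℕ) (t : ℝ) : ℝ := t / (k + 1) - log (1 + t / (k + 1))

def digammaTerm (k : ℕ) (t : ℝ) : ℝ := t / ((k + 1) * (k + 1 + t))

def logBarnesTerm (k : ℕ) (t : ℝ) : ℝ :=
  (k + 1) * log (1 + t / (k + 1)) + t ^ 2 / (2 * (k + 1)) - t

/-- The digamma function `ψ(z) = -γ + ∑ₖ (1 / (k + 1) - 1 / (k + z))`. -/
def digammaSeries (z : ℝ) : ℝ := -eulerMascheroniConstant + ∑' k, digammaTerm k (z - 1)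

def logBarnesGOneAdd (t : ℝ) : ℝ :=
  t / 2 * log (2 * π) - (t + t ^ 2 * (1 + eulerMascheroniConstant)) / 2 +
    ∑' k, logBarnesTerm k t

end

lemma summable_div_nat_add_one_sq (C : ℝ) : Summable fun k : ℕ => C / ((k : ℝ) + 1) ^ 2 := by
  have h := (summable_nat_add_iff 1).mpr (Real.summable_one_div_nat_pow.mpr one_lt_two)
  simpa [div_eq_mul_inv] using h.mul_left C

lemma one_add_div_nat_add_one_pos {t : ℝ} (ht : -1 < t) (k : ℕ) : 0 < 1 + t / (k + 1) := by
  have hk : (0 : ℝ) < k + 1 := by positivity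
  have : -1 < t / (k + 1) := by
    rw [lt_div_iff₀ hk]
    nlinarith [k.cast_nonneg (α := ℝ)]
  linarith

lemma hasDerivAt_logGammaTerm (k : ℕ) {t : ℝ} (ht : -1 < t) :
    HasDerivAt (logGammaTerm k) (digammaTerm k t) t := by
  have hpos := one_add_div_nat_add_one_pos ht k
  have h := ((hasDerivAt_id t).div_const ((k : ℝ) + 1)).sub
    ((((hasDerivAt_id t).div_const ((k : ℝ) + 1)).const_add 1).log hpos.ne')
  refine h.congr_deriv ?_
  have : (0 : ℝ) < k + 1 + t := by linarith
  simp only [digammaTerm, id]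
  field_simp
  ring

lemma hasDerivAt_logBarnesTerm (k : ℕ) {t : ℝ} (ht : -1 < t) :
    HasDerivAt (logBarnesTerm k) (t * digammaTerm k t) t := by
  have hpos := one_add_div_nat_add_one_pos ht k
  have hlog := (((hasDerivAt_id t).div_const ((k : ℝ) + 1)).const_add 1).log hpos.ne'
  have h := ((hlog.const_mul ((k : ℝ) + 1)).add
    ((hasDerivAt_pow 2 t).div_const (2 * ((k : ℝ) + 1)))).sub (hasDerivAt_id t)
  refine h.congr_deriv ?_
  have : (0 : ℝ) < k + 1 + t := by linarith
  simp only [digammaTerm, id]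
  field_simp
  ring

lemma abs_digammaTerm_le {l R y : ℝ} (hl : -1 < l) (h0 : (0 : ℝ) ∈ Ioo l R)
    (hy : y ∈ Ioo l R) (k : ℕ) : |digammaTerm k y| ≤ (R - l) / (1 + l) / (k + 1) ^ 2 := by
  have hk : (0 : ℝ) ≤ k := k.cast_nonneg
  have hl1 : 0 < 1 + l := by linarith
  have hle : (1 + l) * (k + 1) ≤ k + 1 + y := by
    nlinarith [mul_nonpos_of_nonpos_of_nonneg h0.1.le hk, hy.1]
  have hden : (1 + l) * (k + 1) ^ 2 ≤ (k + 1) * (k + 1 + y) := by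
    rw [sq, mul_left_comm]
    exact mul_le_mul_of_nonneg_left hle (by positivity)
  have hpos : (0 : ℝ) < (k + 1) * (k + 1 + y) := lt_of_lt_of_le (by positivity) hden
  have hy' : |y| ≤ R - l := abs_le.mpr ⟨by linarith [hy.1, h0.2], by linarith [hy.2, h0.1]⟩
  rw [digammaTerm, abs_div, abs_of_pos hpos, div_div]
  exact div_le_div₀ (by linarith [h0.1, h0.2]) hy' (by positivity) hden

lemma summable_and_hasDerivAt_tsum_of_eq_zero {g g' : ℕ → ℝ → ℝ} {l R C t : ℝ}
    (hg : ∀ k, ∀ y ∈ Ioo l R, HasDerivAt (g k) (g' k y) y)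
    (hg' : ∀ k, ∀ y ∈ Ioo l R, |g' k y| ≤ C / (k + 1) ^ 2)
    (h0 : (0 : ℝ) ∈ Ioo l R) (hg0 : ∀ k, g k 0 = 0) (ht : t ∈ Ioo l R) :
    Summable (g · t) ∧ HasDerivAt (fun y => ∑' k, g k y) (∑' k, g' k t) t := by
  have hsum0 : Summable (g · 0) := by simp [hg0]
  exact ⟨summable_of_summable_hasDerivAt_of_isPreconnected (summable_div_nat_add_one_sq C)
      isOpen_Ioo isPreconnected_Ioo hg hg' h0 hsum0 ht,
    hasDerivAt_tsum_of_isPreconnected (summable_div_nat_add_one_sq C) isOpen_Ioo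
      isPreconnected_Ioo hg hg' h0 hsum0 ht⟩

lemma exists_Ioo_mem_of_neg_one_lt {t : ℝ} (ht : -1 < t) :
    ∃ l R : ℝ, -1 < l ∧ (0 : ℝ) ∈ Ioo l R ∧ t ∈ Ioo l R := by
  have hm : -1 < min t 0 := lt_min ht (by norm_num)
  exact ⟨(min t 0 - 1) / 2, |t| + 1, by linarith,
    ⟨by linarith [min_le_right t 0], by positivity⟩,
    ⟨by linarith [min_le_left t 0], by linarith [le_abs_self t]⟩⟩

lemma summable_and_hasDerivAt_tsum_logGammaTerm {t : ℝ} (ht : -1 < t) :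
    Summable (logGammaTerm · t) ∧
      HasDerivAt (fun y => ∑' k, logGammaTerm k y) (∑' k, digammaTerm k t) t := by
  obtain ⟨l, R, hl, h0, htI⟩ := exists_Ioo_mem_of_neg_one_lt ht
  exact summable_and_hasDerivAt_tsum_of_eq_zero (C := (R - l) / (1 + l))
    (fun k y hy => hasDerivAt_logGammaTerm k (hl.trans hy.1))
    (fun k y hy => abs_digammaTerm_le hl h0 hy k) h0 (fun k => by simp [logGammaTerm]) htI

lemma summable_and_hasDerivAt_tsum_logBarnesTerm {t : ℝ} (ht : -1 < t) :
    Summable (logBarnesTerm · t) ∧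
      HasDerivAt (fun y => ∑' k, logBarnesTerm k y) (t * ∑' k, digammaTerm k t) t := by
  obtain ⟨l, R, hl, h0, htI⟩ := exists_Ioo_mem_of_neg_one_lt ht
  rw [← tsum_mul_left]
  refine summable_and_hasDerivAt_tsum_of_eq_zero (C := (R - l) * ((R - l) / (1 + l)))
    (fun k y hy => hasDerivAt_logBarnesTerm k (hl.trans hy.1)) (fun k y hy => ?_) h0
    (fun k => by simp [logBarnesTerm]) htI
  rw [abs_mul, mul_div_assoc]
  exact mul_le_mul (abs_le.mpr ⟨by linarith [hy.1, h0.2], by linarith [hy.2, h0.1]⟩)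
    (abs_digammaTerm_le hl h0 hy k) (abs_nonneg _) (by linarith [h0.1, h0.2])

lemma logGammaSeq_one_add {t : ℝ} (ht : -1 < t) (n : ℕ) :
    BohrMollerup.logGammaSeq (1 + t) n =
      t * (log n - harmonic (n + 1)) + (log n - log (n + 1)) +
        ∑ k ∈ Finset.range (n + 1), logGammaTerm k t := by
  have hshift : ∀ m : ℕ, log (1 + t + m) = log (m + 1) + log (1 + t / (m + 1)) := fun m => by
    have hm : (0 : ℝ) < m + 1 := by positivity
    rw [← log_mul hm.ne' (one_add_div_nat_add_one_pos ht m).ne']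
    congr 1
    field_simp
    ring
  have hfact : ∑ m ∈ Finset.range (n + 1), log ((m : ℝ) + 1) = log (n + 1) + log n ! := by
    rw [← log_mul (by positivity) (by positivity), ← Nat.cast_add_one, ← Nat.cast_mul,
      ← Nat.factorial_succ, ← Finset.prod_range_add_one_eq_factorial, Nat.cast_prod,
      log_prod (fun m _ => by positivity)]
    push_cast
    rfl
  simp only [BohrMollerup.logGammaSeq, logGammaTerm, hshift, Finset.sum_add_distrib,
    Finset.sum_sub_distrib, hfact, harmonic]
  push_cast
  simp only [div_eq_mul_inv t, ← Finset.mul_sum]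
  ring

lemma log_Gamma_one_add {t : ℝ} (ht : -1 < t) :
    log (Gamma (1 + t)) = -eulerMascheroniConstant * t + ∑' k, logGammaTerm k t := by
  refine tendsto_nhds_unique (BohrMollerup.tendsto_log_gamma (by linarith)) ?_
  have hharmonic : Tendsto (fun n : ℕ => log n - harmonic (n + 1)) atTop
      (𝓝 (-eulerMascheroniConstant)) := by
    have h := (tendsto_harmonic_sub_log.comp (tendsto_add_atTop_nat 1)).add
      tendsto_log_nat_add_one_sub_log
    simpa using h.neg
  have hlog : Tendsto (fun n : ℕ => log n - log (n + 1)) atTop (𝓝 0) := by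
    simpa using tendsto_log_nat_add_one_sub_log.neg
  have hsum := (summable_and_hasDerivAt_tsum_logGammaTerm ht).1.hasSum.tendsto_sum_nat.comp
    (tendsto_add_atTop_nat 1)
  refine Tendsto.congr (fun n => (logGammaSeq_one_add ht n).symm) ?_
  simpa [mul_comm] using ((hharmonic.const_mul t).add hlog).add hsum

lemma continuousOn_digammaSeries : ContinuousOn digammaSeries (Ioi 0) := by
  intro z hz
  have ht : -1 < z - 1 := by linarith [mem_Ioi.mp hz]
  obtain ⟨l, R, hl, h0, hzI⟩ := exists_Ioo_mem_of_neg_one_lt ht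
  have hsum : ContinuousOn (fun t => ∑' k, digammaTerm k t) (Ioo l R) := by
    refine continuousOn_tsum (fun k t ht => ?_) (summable_div_nat_add_one_sq ((R - l) / (1 + l)))
      (fun k t ht => abs_digammaTerm_le hl h0 ht k)
    have : (0 : ℝ) < k + 1 + t := by linarith [k.cast_nonneg (α := ℝ), ht.1]
    exact (continuousAt_id.div (by fun_prop) (by positivity)).continuousWithinAt
  have hsub : ContinuousAt (fun y : ℝ => y - 1) z := by fun_prop
  exact (continuousAt_const.add ((hsum.continuousAt (Ioo_mem_nhds hzI.1 hzI.2)).comp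
    (f := fun y => y - 1) hsub)).continuousWithinAt

lemma hasDerivAt_log_Gamma {z : ℝ} (hz : 0 < z) :
    HasDerivAt (fun z => log (Gamma z)) (digammaSeries z) z := by
  have ht : -1 < z - 1 := by linarith
  have h := (((hasDerivAt_id' (z - 1)).const_mul (-eulerMascheroniConstant)).add
    (summable_and_hasDerivAt_tsum_logGammaTerm ht).2).comp_sub_const z 1
  refine (h.congr_deriv (by simp [digammaSeries])).congr_of_eventuallyEq ?_
  filter_upwards [eventually_gt_nhds hz] with y hy
  conv_lhs => rw [← add_sub_cancel 1 y]
  exact log_Gamma_one_add (by linarith)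

lemma barnesG_one_add_s9 {t : ℝ} (ht : -1 < t) : barnesG (1 + t) = exp (logBarnesGOneAdd t) := by
  have hprod : HasProd (fun k : ℕ => (1 + t / ((k : ℝ) + 1)) ^ (k + 1) *
      exp (t ^ 2 / (2 * ((k : ℝ) + 1)) - t)) (exp (∑' k, logBarnesTerm k t)) := by
    refine (summable_and_hasDerivAt_tsum_logBarnesTerm ht).1.hasSum.rexp.congr_fun fun k => ?_
    rw [Function.comp_apply, logBarnesTerm, add_sub_assoc, exp_add, ← rpow_natCast,
      rpow_def_of_pos (one_add_div_nat_add_one_pos ht k)]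
    push_cast
    rw [mul_comm (log _)]
  simp only [barnesG, add_sub_cancel_left]
  rw [hprod.tprod_eq, rpow_def_of_pos (by positivity), ← exp_add, ← exp_add, logBarnesGOneAdd]
  congr 1
  ring

lemma barnesG_pos {z : ℝ} (hz : 0 < z) : 0 < barnesG z := by
  rw [← add_sub_cancel 1 z, barnesG_one_add_s9 (by linarith)]
  exact exp_pos _

lemma hasDerivAt_log_barnesG {z : ℝ} (hz : 0 < z) :
    HasDerivAt (fun z => log (barnesG z))
      (log (2 * π) / 2 - 1 / 2 - (z - 1) + (z - 1) * digammaSeries z) z := by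
  have ht : -1 < z - 1 := by linarith
  have hpoly : HasDerivAt
      (fun t : ℝ => t / 2 * log (2 * π) - (t + t ^ 2 * (1 + eulerMascheroniConstant)) / 2)
      (1 / 2 * log (2 * π) -
        (1 + (2 : ℕ) * (z - 1) ^ (2 - 1) * (1 + eulerMascheroniConstant)) / 2)
      (z - 1) :=
    (((hasDerivAt_id' _).div_const 2).mul_const _).sub
      (((hasDerivAt_id' _).add ((hasDerivAt_pow 2 _).mul_const _)).div_const 2)
  have h := (hpoly.add (summable_and_hasDerivAt_tsum_logBarnesTerm ht).2).comp_sub_const z 1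
  refine (h.congr_deriv (by simp only [digammaSeries]; push_cast; ring)).congr_of_eventuallyEq ?_
  filter_upwards [eventually_gt_nhds hz] with y hy
  conv_lhs => rw [← add_sub_cancel 1 y]
  rw [barnesG_one_add_s9 (by linarith), log_exp]
  rfl

lemma eventually_Gamma_sub_pos_and_Gamma_add_pos {c x : ℝ} (hm : 0 < c - x) (hp : 0 < c + x) :
    ∀ᶠ y in 𝓝 x, 0 < Gamma (c - y) ∧ 0 < Gamma (c + y) := by
  filter_upwards [eventually_lt_nhds (show x < c by linarith),
    eventually_gt_nhds (show -c < x by linarith)] with y h₁ h₂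
  exact ⟨Gamma_pos_of_pos (by linarith), Gamma_pos_of_pos (by linarith)⟩

lemma deriv_log_Gamma_sub_mul_Gamma_add {c x : ℝ} (hm : 0 < c - x) (hp : 0 < c + x) :
    deriv (fun y => log (Gamma (c - y) * Gamma (c + y))) x =
      digammaSeries (c + x) - digammaSeries (c - x) := by
  have h := ((hasDerivAt_log_Gamma hm).comp_const_sub c x).add
    ((hasDerivAt_log_Gamma hp).comp_const_add c x)
  refine ((h.congr_of_eventuallyEq ?_).deriv).trans (by ring)
  filter_upwards [eventually_Gamma_sub_pos_and_Gamma_add_pos hm hp] with y hy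
  exact log_mul hy.1.ne' hy.2.ne'

lemma deriv_log_Gamma_add_div_Gamma_sub {c x : ℝ} (hm : 0 < c - x) (hp : 0 < c + x) :
    deriv (fun y => log (Gamma (c + y) / Gamma (c - y))) x =
      digammaSeries (c + x) + digammaSeries (c - x) := by
  have h := ((hasDerivAt_log_Gamma hp).comp_const_add c x).sub
    ((hasDerivAt_log_Gamma hm).comp_const_sub c x)
  refine ((h.congr_of_eventuallyEq ?_).deriv).trans (by ring)
  filter_upwards [eventually_Gamma_sub_pos_and_Gamma_add_pos hm hp] with y hy
  exact log_div hy.2.ne' hy.1.ne'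

lemma hasDerivAt_log_barnesG_add_add_log_barnesG_sub {c x : ℝ} (hm : 0 < c - x)
    (hp : 0 < c + x) :
    HasDerivAt (fun y => log (barnesG (c + y)) + log (barnesG (c - y)))
      ((c - 1) * (digammaSeries (c + x) - digammaSeries (c - x)) +
        x * (digammaSeries (c + x) + digammaSeries (c - x)) - 2 * x) x :=
  (((hasDerivAt_log_barnesG hp).comp_const_add c x).add
    ((hasDerivAt_log_barnesG hm).comp_const_sub c x)).congr_deriv (by ring)

theorem integral_Gamma_combination_eq_log_barnesG_general (α β : ℝ)
    (hβ : |β| < 1 + α / 2) :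
    ∫ x in (0 : ℝ)..β,
        (α / 2 * deriv (fun y =>
            Real.log (Real.Gamma (1 + α / 2 - y) * Real.Gamma (1 + α / 2 + y))) x
          + x * deriv (fun y =>
            Real.log (Real.Gamma (1 + α / 2 + y) / Real.Gamma (1 + α / 2 - y))) x
          - 2 * x)
      = Real.log (barnesG (1 + α / 2 + β) * barnesG (1 + α / 2 - β)
          / barnesG (1 + α / 2) ^ 2) := by
  set c := 1 + α / 2
  have hβ' := abs_lt.mp hβ
  have hmem : ∀ x ∈ uIcc 0 β, 0 < c - x ∧ 0 < c + x := fun x hx => by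
    rcases mem_uIcc.mp hx with ⟨h₁, h₂⟩ | ⟨h₁, h₂⟩ <;> constructor <;> linarith
  have hhalf : α / 2 = c - 1 := by ring
  rw [intervalIntegral.integral_congr (g := fun x => (c - 1) * (digammaSeries (c + x) -
      digammaSeries (c - x)) + x * (digammaSeries (c + x) + digammaSeries (c - x)) - 2 * x)
      fun x hx => by
        rw [deriv_log_Gamma_sub_mul_Gamma_add (hmem x hx).1 (hmem x hx).2,
          deriv_log_Gamma_add_div_Gamma_sub (hmem x hx).1 (hmem x hx).2, hhalf]]
  have hψp : ContinuousOn (fun x => digammaSeries (c + x)) (uIcc 0 β) :=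
    continuousOn_digammaSeries.comp (by fun_prop) fun x hx => (hmem x hx).2
  have hψm : ContinuousOn (fun x => digammaSeries (c - x)) (uIcc 0 β) :=
    continuousOn_digammaSeries.comp (by fun_prop) fun x hx => (hmem x hx).1
  rw [intervalIntegral.integral_eq_sub_of_hasDerivAt
      (fun x hx => hasDerivAt_log_barnesG_add_add_log_barnesG_sub (hmem x hx).1 (hmem x hx).2)
      (by fun_prop : ContinuousOn _ _).intervalIntegrable]
  obtain ⟨hcm, hcp⟩ := hmem β right_mem_uIcc
  have hc : 0 < c := by simpa using (hmem 0 left_mem_uIcc).2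
  rw [add_zero, sub_zero, log_div (mul_pos (barnesG_pos hcp) (barnesG_pos hcm)).ne'
      (pow_pos (barnesG_pos hc) 2).ne', log_mul (barnesG_pos hcp).ne' (barnesG_pos hcm).ne',
    log_pow]
  push_cast
  ring

/-- For `α > 0` and `|β| < 1 + α/2`,
`∫_0^β [(α/2) d/dx log(Γ(1+α/2-x)Γ(1+α/2+x)) + x d/dx log(Γ(1+α/2+x)/Γ(1+α/2-x)) - 2x] dx
  = log(G(1+α/2+β) G(1+α/2-β) / G(1+α/2)²)`. -/
theorem integral_Gamma_combination_eq_log_barnesG (α β : ℝ) (hα : 0 < α)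
    (hβ : |β| < 1 + α / 2) :
    ∫ x in (0 : ℝ)..β,
        (α / 2 * deriv (fun y =>
            Real.log (Real.Gamma (1 + α / 2 - y) * Real.Gamma (1 + α / 2 + y))) x
          + x * deriv (fun y =>
            Real.log (Real.Gamma (1 + α / 2 + y) / Real.Gamma (1 + α / 2 - y))) x
          - 2 * x)
      = Real.log (barnesG (1 + α / 2 + β) * barnesG (1 + α / 2 - β)
          / barnesG (1 + α / 2) ^ 2) :=
  integral_Gamma_combination_eq_log_barnesG_general α β hβ
end

section
/- (Heine/Andréief identity) Let w be an integrable function on an interval I ⊂ ℝ with all moments ∫_I |x|^m w(x) dx finite. Then for every n ≥ 1, det( ∫_I x^{j+k} w(x) dx )_{j,k=0}^{n-1} = (1/n!) ∫_{I^n} ∏_{1 ≤ j < k ≤ n} (x_k - x_j)^2 ∏_{j=1}^{n} w(x_j) dx_1 ... dx_n. -/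
open MeasureTheory Filter Set

/-!
Writing `det (x_k^j) · det (x_k^j w(x_k))` by the Leibniz formula turns the integrand into a
signed sum, over pairs of permutations `(σ, τ)`, of products of one-variable functions; by
Fubini each term integrates to `∏_k M (σ k) (τ k)` for the Hankel moment matrix `M`, and the sum
over `τ` for fixed `σ` is `det M` (Andréief's identity).

When `w` is not a.e. measurable both sides vanish as undefined integrals: a moment `t^m w(t)`
can be divided by `t^m ≠ 0`, and the `n`-fold integrand by the squared Vandermonde determinant,
which is nonzero off the null set of diagonals; a slice of `∏ w(x_j)` on which the other factors
do not vanish would then make `w` itself measurable.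
-/

namespace Matrix

open Equiv

theorem sum_perm_sum_perm_sign_smul_prod {ι R : Type*} [Fintype ι] [DecidableEq ι]
    [CommRing R] (M : Matrix ι ι R) :
    ∑ σ : Perm ι, ∑ τ : Perm ι, (Perm.sign σ * Perm.sign τ) • ∏ k, M (σ k) (τ k)
      = (Fintype.card ι).factorial * M.det := by
  have row (σ : Perm ι) :
      ∑ τ : Perm ι, (Perm.sign σ * Perm.sign τ) • ∏ k, M (σ k) (τ k) = M.det := by
    have h :
        ∑ τ : Perm ι, Perm.sign τ • ∏ k, M (σ k) (τ k) = Perm.sign σ • M.det := by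
      rw [Units.smul_def, zsmul_eq_mul, ← det_permute, ← det_transpose, det_apply]
      rfl
    simp_rw [mul_smul, ← Finset.smul_sum, h, smul_smul, Int.units_mul_self, one_smul]
  simp_rw [row, Finset.sum_const, Finset.card_univ, Fintype.card_perm, nsmul_eq_mul]

theorem det_mul_det_eq_sum_perm_sum_perm {ι R : Type*} [Fintype ι] [DecidableEq ι]
    [CommRing R] (A B : Matrix ι ι R) :
    A.det * B.det = ∑ σ : Perm ι, ∑ τ : Perm ι,
      (Perm.sign σ * Perm.sign τ) • ∏ k, A (σ k) k * B (τ k) k := by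
  simp_rw [det_apply, Finset.sum_mul_sum, smul_mul_smul_comm, Finset.prod_mul_distrib]

theorem prod_filter_lt_sub_sq_eq_det_vandermonde_sq {R : Type*} [CommRing R] {n : ℕ}
    (x : Fin n → R) :
    ∏ q ∈ Finset.univ.filter (fun q : Fin n × Fin n => q.1 < q.2), (x q.2 - x q.1) ^ 2
      = (vandermonde x).det ^ 2 := by
  rw [det_vandermonde, ← Finset.prod_pow, Finset.prod_filter, ← Finset.univ_product_univ,
    Finset.prod_product]
  refine Finset.prod_congr rfl fun i _ => ?_
  rw [← Finset.prod_pow, ← Finset.prod_filter]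
  congr 1
  ext j
  simp

theorem det_of_pow_mul_det_of_pow_mul {R : Type*} [CommRing R] {n : ℕ} (w : R → R)
    (x : Fin n → R) :
    (of fun j k : Fin n => x k ^ (j : ℕ)).det
        * (of fun j k : Fin n => x k ^ (j : ℕ) * w (x k)).det
      = (vandermonde x).det ^ 2 * ∏ k, w (x k) := by
  have hw : (of fun j k : Fin n => x k ^ (j : ℕ) * w (x k))
      = of fun j k => w (x k) * (vandermonde x)ᵀ j k := by
    ext j k
    simp [mul_comm]
  rw [hw, det_mul_row, show (of fun j k : Fin n => x k ^ (j : ℕ)) = (vandermonde x)ᵀ from rfl,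
    det_transpose]
  ring

end Matrix

open Equiv Matrix

section PiMeasure

variable {α : Type*} [MeasurableSpace α] {μ : Measure α} [SigmaFinite μ]

theorem integral_det_mul_det_eq_factorial_mul_det {ι 𝕜 : Type*} [Fintype ι] [DecidableEq ι]
    [RCLike 𝕜] (f g : ι → α → 𝕜)
    (hfg : ∀ i j, Integrable (fun t => f i t * g j t) μ) :
    ∫ x : ι → α, (of fun i k => f i (x k)).det * (of fun i k => g i (x k)).det
        ∂(Measure.pi fun _ => μ)
      = (Fintype.card ι).factorial * (of fun i j => ∫ t, f i t * g j t ∂μ).det := by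
  have hint (σ τ : Perm ι) : Integrable (fun x : ι → α =>
      (Perm.sign σ * Perm.sign τ) • ∏ k, f (σ k) (x k) * g (τ k) (x k))
      (Measure.pi fun _ => μ) :=
    (Integrable.fintype_prod fun k => hfg (σ k) (τ k)).smul _
  simp_rw [det_mul_det_eq_sum_perm_sum_perm, of_apply]
  rw [integral_finsetSum _ fun σ _ => integrable_finsetSum _ fun τ _ => hint σ τ,
    ← sum_perm_sum_perm_sign_smul_prod]
  refine Finset.sum_congr rfl fun σ _ => ?_
  rw [integral_finsetSum _ fun τ _ => hint σ τ]
  refine Finset.sum_congr rfl fun τ _ => ?_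
  simp only [Units.smul_def, zsmul_eq_mul, integral_const_mul, of_apply,
    integral_fintype_prod_eq_prod fun k t => f (σ k) t * g (τ k) t]

theorem ae_pi_apply_ne_apply [MeasurableEq α] [NullSingletonClass μ] {n : ℕ} {i j : Fin n}
    (hij : i ≠ j) : ∀ᵐ x ∂(Measure.pi fun _ : Fin n => μ), x i ≠ x j := by
  obtain ⟨m, rfl⟩ : ∃ m, n = m + 1 := Nat.exists_eq_add_one.2 (Fin.pos i)
  obtain ⟨k, rfl⟩ := Fin.exists_succAbove_eq hij.symm
  have hmeas : MeasurableSet {p : α × (Fin m → α) | p.1 ≠ p.2 k} :=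
    (measurableSet_eq_fun (f := fun p : α × (Fin m → α) => p.1) (g := fun p => p.2 k)
      (by fun_prop) (by fun_prop)).compl
  have hprod : ∀ᵐ p ∂μ.prod (Measure.pi fun _ : Fin m => μ), p.1 ≠ p.2 k :=
    (Measure.ae_prod_iff_ae_ae hmeas).2 <| .of_forall fun t =>
      (Measure.ae_eval_ne _ k t).mono fun _ h => Ne.symm h
  exact (measurePreserving_piFinSuccAbove (fun _ => μ) i).quasiMeasurePreserving.ae hprod

theorem ae_pi_injective [MeasurableEq α] [NullSingletonClass μ] {n : ℕ} :
    ∀ᵐ x ∂(Measure.pi fun _ : Fin n => μ), Function.Injective x := by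
  have h : ∀ᵐ x ∂(Measure.pi fun _ : Fin n => μ), ∀ i j, x i = x j → i = j :=
    ae_all_iff.2 fun i => ae_all_iff.2 fun j => by
      rcases eq_or_ne i j with rfl | hij
      · exact .of_forall fun _ _ => rfl
      · exact (ae_pi_apply_ne_apply hij).mono fun _ h heq => absurd heq h
  exact h.mono fun x hx i j => hx i j

theorem MeasureTheory.AEStronglyMeasurable.of_pi_prod {𝕜 : Type*} [RCLike 𝕜] {w : α → 𝕜}
    {n : ℕ} (h : AEStronglyMeasurable (fun x : Fin (n + 1) → α => ∏ i, w (x i))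
      (Measure.pi fun _ => μ)) :
    AEStronglyMeasurable w μ := by
  by_cases h0 : μ {t | w t ≠ 0} = 0
  · have hw0 : ∀ᵐ t ∂μ, 0 = w t := ae_iff.2 (by simpa [eq_comm] using h0)
    exact aestronglyMeasurable_zero.congr hw0
  set ν := Measure.pi fun _ : Fin n => μ
  have hsplit : AEStronglyMeasurable (fun p : α × (Fin n → α) => w p.1 * ∏ i, w (p.2 i))
      (μ.prod ν) := by
    have := h.comp_measurePreserving (measurePreserving_piFinSuccAbove (fun _ => μ) 0).symm
    simpa [Function.comp_def, Fin.prod_univ_succ, MeasurableEquiv.piFinSuccAbove_symm_apply,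
      Fin.insertNthEquiv, Fin.insertNth_zero] using this
  have hpos : ν {y | ∏ i, w (y i) ≠ 0} ≠ 0 := by
    refine fun hν => ?_
    have : ν (univ.pi fun _ => {t | w t ≠ 0}) = 0 :=
      measure_mono_null (fun y hy => Finset.prod_ne_zero_iff.2 fun i _ => hy i (mem_univ i)) hν
    simp [ν, h0] at this
  obtain ⟨y, hy, hc⟩ := (hsplit.prodMk_right.and_frequently (frequently_ae_iff.2 hpos)).exists
  exact (hy.mul_const (∏ i, w (y i))⁻¹).congr (.of_forall fun t => by field_simp)

end PiMeasure

section Heine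

variable {μ : Measure ℝ} {w : ℝ → ℝ}

theorem integral_det_vandermonde_sq_mul_prod [SigmaFinite μ]
    (hw : ∀ m : ℕ, Integrable (fun t => t ^ m * w t) μ) (n : ℕ) :
    ∫ x : Fin n → ℝ, (vandermonde x).det ^ 2 * ∏ k, w (x k) ∂(Measure.pi fun _ => μ)
      = n.factorial
        * (of fun j k : Fin n => ∫ t, t ^ ((j : ℕ) + (k : ℕ)) * w t ∂μ).det := by
  have hmom (j k : Fin n) :
      (fun t : ℝ => t ^ (j : ℕ) * (t ^ (k : ℕ) * w t))
        = fun t => t ^ ((j : ℕ) + k) * w t := by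
    ext t
    ring
  have h := integral_det_mul_det_eq_factorial_mul_det (μ := μ)
    (fun (j : Fin n) t => t ^ (j : ℕ)) (fun k t => t ^ (k : ℕ) * w t)
    fun j k => by simpa only [hmom] using hw _
  simpa only [det_of_pow_mul_det_of_pow_mul, hmom, Fintype.card_fin] using h

theorem integral_pow_mul_of_not_aestronglyMeasurable [NullSingletonClass μ]
    (hw : ¬ AEStronglyMeasurable w μ) (m : ℕ) : ∫ t, t ^ m * w t ∂μ = 0 := by
  refine integral_undef fun h => hw ((aestronglyMeasurable_smul_iff₀ (c := fun t => t ^ m)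
    (by fun_prop) ?_).1 h.1)
  have hne : ∀ᵐ t ∂μ, t ≠ 0 := compl_mem_ae_iff.2 (measure_singleton 0)
  exact hne.mono fun t ht => pow_ne_zero m ht

theorem integral_det_vandermonde_sq_mul_prod_of_not_aestronglyMeasurable [SigmaFinite μ]
    [NullSingletonClass μ] (hw : ¬ AEStronglyMeasurable w μ) (n : ℕ) :
    ∫ x : Fin (n + 1) → ℝ, (vandermonde x).det ^ 2 * ∏ k, w (x k)
        ∂(Measure.pi fun _ => μ) = 0 := by
  have hcont : Continuous fun x : Fin (n + 1) → ℝ => (vandermonde x).det ^ 2 :=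
    (Continuous.matrix_det (A := vandermonde) (continuous_pi fun i => continuous_pi fun j =>
      (continuous_apply i).pow j)).pow 2
  refine integral_undef fun h => hw (AEStronglyMeasurable.of_pi_prod (n := n) ?_)
  refine (aestronglyMeasurable_smul_iff₀ hcont.aestronglyMeasurable ?_).1 h.1
  exact ae_pi_injective.mono fun x hx => pow_ne_zero 2 (det_vandermonde_ne_zero_iff.2 hx)

end Heine

theorem heine_identity_general (S : Set ℝ) (w : ℝ → ℝ)
    (hmom : ∀ m : ℕ, IntegrableOn (fun x => |x| ^ m * |w x|) S)
    (n : ℕ) (hn : 1 ≤ n) :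
    Matrix.det (Matrix.of fun j k : Fin n =>
        ∫ x in S, x ^ ((j : ℕ) + (k : ℕ)) * w x)
      = (1 / (n.factorial : ℝ)) *
          ∫ x : Fin n → ℝ in Set.univ.pi (fun _ => S),
            (∏ q ∈ Finset.univ.filter (fun q : Fin n × Fin n => q.1 < q.2),
              (x q.2 - x q.1) ^ 2) * ∏ j, w (x j) := by
  rw [volume_pi, Measure.restrict_pi_pi]
  simp_rw [prod_filter_lt_sub_sq_eq_det_vandermonde_sq]
  by_cases hw : AEStronglyMeasurable w (volume.restrict S)
  · have hint (m : ℕ) : Integrable (fun t => t ^ m * w t) (volume.restrict S) :=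
      (hmom m).mono' ((continuous_pow m).aestronglyMeasurable.mul hw)
        (.of_forall fun t => by simp)
    rw [integral_det_vandermonde_sq_mul_prod hint]
    field_simp
  · obtain ⟨m, rfl⟩ := Nat.exists_eq_add_of_le' hn
    have hM : (of fun j k : Fin (m + 1) => ∫ x in S, x ^ ((j : ℕ) + (k : ℕ)) * w x) = 0 :=
      ext fun j k => integral_pow_mul_of_not_aestronglyMeasurable hw _
    rw [hM, det_zero, integral_det_vandermonde_sq_mul_prod_of_not_aestronglyMeasurable hw,
      mul_zero]

/-- Heine/Andréief identity: the Hankel determinant of moments of `w` equals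
`(1/n!)` times the `n`-fold integral of the squared Vandermonde determinant
against `∏ w(x_j)`. -/
theorem heine_identity (S : Set ℝ) (hSmeas : MeasurableSet S) (w : ℝ → ℝ)
    (hmom : ∀ m : ℕ, IntegrableOn (fun x => |x| ^ m * |w x|) S)
    (n : ℕ) (hn : 1 ≤ n) :
    Matrix.det (Matrix.of fun j k : Fin n =>
        ∫ x in S, x ^ ((j : ℕ) + (k : ℕ)) * w x)
      = (1 / (n.factorial : ℝ)) *
          ∫ x : Fin n → ℝ in Set.univ.pi (fun _ => S),
            (∏ q ∈ Finset.univ.filter (fun q : Fin n × Fin n => q.1 < q.2),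
              (x q.2 - x q.1) ^ 2) * ∏ j, w (x j) :=
  heine_identity_general S w hmom n hn
end
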